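/- arXiv:2007.06650 — 8 statements merged into one kernel-verified Lean document; each statement's English description precedes it below -/
import Mathlib

section
/- If K is a (κ, γ)-strongly stable controller for the system (A, B) with κ ≥ 1, and matrices Â, B̂ satisfy ‖A − Â‖ ≤ ε and ‖B − B̂‖ ≤ ε in spectral norm, then K is (κ, γ − 2εκ²)-strongly stable for (Â, B̂). -/
open scoped Matrix.Norms.L2Operator

/-- `K` is a `(κ, γ)`-strongly stable controller for the system `(A, B)`:
`‖K‖ ≤ κ` and `A + BK = H L H⁻¹` with `‖H‖ ‖H⁻¹‖ ≤ κ` and `‖L‖ ≤ 1 - γ`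
(all norms are spectral norms). -/
def StronglyStable {dx du : ℕ} (A : Matrix (Fin dx) (Fin dx) ℝ)
    (B : Matrix (Fin dx) (Fin du) ℝ) (K : Matrix (Fin du) (Fin dx) ℝ)
    (κ γ : ℝ) : Prop :=
  ‖K‖ ≤ κ ∧ ∃ H L : Matrix (Fin dx) (Fin dx) ℝ, IsUnit H ∧
    A + B * K = H * L * H⁻¹ ∧ ‖H‖ * ‖H⁻¹‖ ≤ κ ∧ ‖L‖ ≤ 1 - γ

theorem Matrix.mul_mul_inv_add {n R : Type*} [Fintype n] [DecidableEq n] [CommRing R]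
    {H : Matrix n n R} (hH : IsUnit H) (L Δ : Matrix n n R) :
    H * L * H⁻¹ + Δ = H * (L + H⁻¹ * Δ * H) * H⁻¹ := by
  have hdet : IsUnit H.det := (Matrix.isUnit_iff_isUnit_det H).mp hH
  simp [Matrix.mul_add, Matrix.add_mul, Matrix.mul_assoc, hdet]

section

variable {dx du : ℕ} {A Ahat : Matrix (Fin dx) (Fin dx) ℝ} {B Bhat : Matrix (Fin dx) (Fin du) ℝ}
  {K : Matrix (Fin du) (Fin dx) ℝ} {κ γ ε : ℝ}

theorem StronglyStable.of_le {γ' : ℝ} (hss : StronglyStable A B K κ γ) (hγ : γ' ≤ γ) :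
    StronglyStable A B K κ γ' := by
  obtain ⟨hK, H, L, hH, heq, hHn, hLn⟩ := hss
  exact ⟨hK, H, L, hH, heq, hHn, by linarith⟩

/-- Same `H`; the closed-loop perturbation `Δ` is absorbed into `L` as `L + H⁻¹ Δ H`. -/
theorem StronglyStable.of_norm_closedLoop_sub_le {δ : ℝ} (hss : StronglyStable A B K κ γ)
    (hδ : ‖(Ahat + Bhat * K) - (A + B * K)‖ ≤ δ) :
    StronglyStable Ahat Bhat K κ (γ - κ * δ) := by
  obtain ⟨hK, H, L, hH, heq, hHn, hLn⟩ := hss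
  set Δ := (Ahat + Bhat * K) - (A + B * K)
  refine ⟨hK, H, L + H⁻¹ * Δ * H, hH, ?_, hHn, ?_⟩
  · rw [← Matrix.mul_mul_inv_add hH, ← heq, add_sub_cancel]
  · have hκ : 0 ≤ κ := (by positivity : 0 ≤ ‖H‖ * ‖H⁻¹‖).trans hHn
    calc ‖L + H⁻¹ * Δ * H‖ ≤ ‖L‖ + ‖H⁻¹ * Δ * H‖ := norm_add_le _ _
      _ ≤ ‖L‖ + ‖H⁻¹‖ * ‖Δ‖ * ‖H‖ := by gcongr; exact norm_mul₃_le
      _ = ‖L‖ + ‖H‖ * ‖H⁻¹‖ * ‖Δ‖ := by ring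
      _ ≤ (1 - γ) + κ * δ := by gcongr
      _ = 1 - (γ - κ * δ) := by ring

theorem norm_closedLoop_sub_le (hA : ‖A - Ahat‖ ≤ ε) (hB : ‖B - Bhat‖ ≤ ε) (hK : ‖K‖ ≤ κ) :
    ‖(Ahat + Bhat * K) - (A + B * K)‖ ≤ ε * (1 + κ) := by
  have hε : 0 ≤ ε := (norm_nonneg _).trans hA
  have hsplit : (Ahat + Bhat * K) - (A + B * K) = (Ahat - A) + (Bhat - B) * K := by
    rw [Matrix.sub_mul]; abel
  calc ‖(Ahat + Bhat * K) - (A + B * K)‖ ≤ ‖Ahat - A‖ + ‖(Bhat - B) * K‖ := by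
        rw [hsplit]; exact norm_add_le _ _
    _ ≤ ‖Ahat - A‖ + ‖Bhat - B‖ * ‖K‖ := by gcongr; exact Matrix.l2_opNorm_mul _ _
    _ ≤ ε + ε * κ := by
        rw [norm_sub_rev] at hA hB
        gcongr
    _ = ε * (1 + κ) := by ring

end

theorem stmt0 {dx du : ℕ} (A Ahat : Matrix (Fin dx) (Fin dx) ℝ)
    (B Bhat : Matrix (Fin dx) (Fin du) ℝ) (K : Matrix (Fin du) (Fin dx) ℝ)
    (κ γ ε : ℝ) (hκ : 1 ≤ κ)
    (hss : StronglyStable A B K κ γ)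
    (hA : ‖A - Ahat‖ ≤ ε) (hB : ‖B - Bhat‖ ≤ ε) :
    StronglyStable Ahat Bhat K κ (γ - 2 * ε * κ ^ 2) := by
  have hε : 0 ≤ ε := (norm_nonneg _).trans hA
  refine (hss.of_norm_closedLoop_sub_le (norm_closedLoop_sub_le hA hB hss.1)).of_le ?_
  nlinarith [mul_le_mul_of_nonneg_left hκ (mul_nonneg hε (zero_le_one.trans hκ))]
end

section
/- Let K be (κ̃, γ̃)-strongly stable for (A, B) with κ̃ ≥ 1, and suppose ‖w_t‖ ≤ 1 for all t. If ln(γ̃ ‖x_1‖) ≥ 0 and T₂ ≥ ln(γ̃‖x_1‖)/γ̃, then under x_{t+1} = (A+BK)x_t + w_t, the state satisfies ‖x_{T₂+1}‖ ≤ 2κ̃/γ̃. -/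
open scoped Matrix.Norms.L2Operator

/-- The Euclidean (ℓ²) norm of a vector. -/
noncomputable def enorm' {n : ℕ} (v : Fin n → ℝ) : ℝ := Real.sqrt (∑ i, v i ^ 2)

/-!
In the coordinates `y = H⁻¹ x` the closed loop becomes `y ↦ L y + H⁻¹ w`, a contraction by
`1 - γ` plus a perturbation of size at most `‖H⁻¹‖`. The scalar recursion
`a (t + 1) ≤ (1 - γ) a t + c` gives `a T ≤ (1 - γ)^T a 0 + c / γ`; going back through `H` costs
the factor `‖H‖`, so `‖x_{T+1}‖ ≤ κ ((1 - γ)^T ‖x_1‖ + 1 / γ)`. Finally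
`(1 - γ)^T ≤ exp (-γ T) ≤ 1 / (γ ‖x_1‖)` once `γ T ≥ log (γ ‖x_1‖)`.
-/

open Matrix

section enorm'

variable {m n : ℕ}

lemma enorm'_eq_norm (v : Fin n → ℝ) :
    enorm' v = ‖(EuclideanSpace.equiv (Fin n) ℝ).symm v‖ := by
  simp [enorm', EuclideanSpace.norm_eq, Real.norm_eq_abs, sq_abs]

lemma enorm'_nonneg (v : Fin n → ℝ) : 0 ≤ enorm' v :=
  Real.sqrt_nonneg _

lemma enorm'_add_le (u v : Fin n → ℝ) : enorm' (u + v) ≤ enorm' u + enorm' v := by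
  simp only [enorm'_eq_norm, map_add]
  exact norm_add_le _ _

lemma enorm'_mulVec_le (M : Matrix (Fin m) (Fin n) ℝ) (v : Fin n → ℝ) :
    enorm' (M *ᵥ v) ≤ ‖M‖ * enorm' v := by
  simp only [enorm'_eq_norm]
  exact M.l2_opNorm_mulVec _

end enorm'

lemma le_pow_mul_add_div_of_le_mul_add {a : ℕ → ℝ} {r c : ℝ} (hr0 : 0 ≤ r) (hr1 : r < 1)
    (hc : 0 ≤ c) (h : ∀ t, a (t + 1) ≤ r * a t + c) (T : ℕ) :
    a T ≤ r ^ T * a 0 + c / (1 - r) := by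
  have hr : 0 < 1 - r := sub_pos.mpr hr1
  induction T with
  | zero => simpa using div_nonneg hc hr.le
  | succ T ih =>
    calc a (T + 1) ≤ r * (r ^ T * a 0 + c / (1 - r)) + c :=
          (h T).trans (by gcongr)
      _ = r ^ (T + 1) * a 0 + c / (1 - r) := by field_simp; ring

lemma enorm'_le_of_conj_dynamics {n : ℕ} {H L : Matrix (Fin n) (Fin n) ℝ} (hH : IsUnit H)
    {r W : ℝ} (hL : ‖L‖ ≤ r) (hr : r < 1) (x w : ℕ → Fin n → ℝ)
    (hw : ∀ t, enorm' (w t) ≤ W) (hdyn : ∀ t, x (t + 1) = (H * L * H⁻¹) *ᵥ x t + w t)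
    (T : ℕ) :
    enorm' (x T) ≤ ‖H‖ * ‖H⁻¹‖ * (r ^ T * enorm' (x 0) + W / (1 - r)) := by
  have hdet : IsUnit H.det := (isUnit_iff_isUnit_det H).mp hH
  have hW : 0 ≤ W := (enorm'_nonneg _).trans (hw 0)
  have hr0 : 0 ≤ r := (norm_nonneg L).trans hL
  set y : ℕ → Fin n → ℝ := fun t => H⁻¹ *ᵥ x t
  have hx : ∀ t, x t = H *ᵥ y t := fun t => by
    simp only [y, mulVec_mulVec, mul_nonsing_inv H hdet, one_mulVec]
  have hy : ∀ t, y (t + 1) = L *ᵥ y t + H⁻¹ *ᵥ w t := fun t => by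
    simp only [y, hdyn t, mulVec_add, mulVec_mulVec, ← mul_assoc,
      nonsing_inv_mul H hdet, one_mul]
  have hstep : ∀ t, enorm' (y (t + 1)) ≤ r * enorm' (y t) + ‖H⁻¹‖ * W := fun t => by
    rw [hy t]
    calc enorm' (L *ᵥ y t + H⁻¹ *ᵥ w t)
        ≤ ‖L‖ * enorm' (y t) + ‖H⁻¹‖ * enorm' (w t) :=
          (enorm'_add_le _ _).trans (add_le_add (enorm'_mulVec_le _ _) (enorm'_mulVec_le _ _))
      _ ≤ r * enorm' (y t) + ‖H⁻¹‖ * W := by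
          gcongr
          exacts [enorm'_nonneg _, hw t]
  have hyT := le_pow_mul_add_div_of_le_mul_add (a := fun t => enorm' (y t)) hr0 hr
    (mul_nonneg (norm_nonneg H⁻¹) hW) hstep T
  calc enorm' (x T) ≤ ‖H‖ * enorm' (y T) := hx T ▸ enorm'_mulVec_le _ _
    _ ≤ ‖H‖ * (r ^ T * (‖H⁻¹‖ * enorm' (x 0)) + ‖H⁻¹‖ * W / (1 - r)) := by
        gcongr
        exact hyT.trans (by gcongr; exact enorm'_mulVec_le _ _)
    _ = ‖H‖ * ‖H⁻¹‖ * (r ^ T * enorm' (x 0) + W / (1 - r)) := by ring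

lemma one_sub_pow_mul_le_inv_of_log_div_le {γ X : ℝ} {T : ℕ} (hγ0 : 0 < γ) (hγ1 : γ ≤ 1)
    (hX : 0 ≤ X) (hT : Real.log (γ * X) / γ ≤ T) :
    (1 - γ) ^ T * X ≤ 1 / γ := by
  rcases hX.eq_or_lt with rfl | hX
  · simpa using hγ0.le
  have hγX : 0 < γ * X := mul_pos hγ0 hX
  have hexp : (1 - γ) ^ T ≤ Real.exp (-(γ * T)) := by
    calc (1 - γ) ^ T ≤ Real.exp (-γ) ^ T :=
          pow_le_pow_left₀ (sub_nonneg.mpr hγ1) (Real.one_sub_le_exp_neg γ) T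
      _ = Real.exp (-(γ * T)) := by rw [← Real.exp_nat_mul]; ring_nf
  have hlog : Real.exp (-(γ * T)) ≤ (γ * X)⁻¹ := by
    rw [← Real.exp_log hγX, ← Real.exp_neg, Real.exp_le_exp, neg_le_neg_iff]
    exact (div_le_iff₀' hγ0).mp hT
  calc (1 - γ) ^ T * X ≤ (γ * X)⁻¹ * X := by gcongr; exact hexp.trans hlog
    _ = 1 / γ := by field_simp

theorem stmt3_general {dx du : ℕ} (A : Matrix (Fin dx) (Fin dx) ℝ)
    (B : Matrix (Fin dx) (Fin du) ℝ) (K : Matrix (Fin du) (Fin dx) ℝ)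
    (κ γ : ℝ) (hγ0 : 0 < γ)
    (hss : StronglyStable A B K κ γ)
    (x : ℕ → Fin dx → ℝ) (w : ℕ → Fin dx → ℝ)
    (hw : ∀ t, enorm' (w t) ≤ 1)
    (hdyn : ∀ t, 1 ≤ t → x (t + 1) = (A + B * K).mulVec (x t) + w t)
    (T₂ : ℕ)
    (hT₂ : Real.log (γ * enorm' (x 1)) / γ ≤ (T₂ : ℝ)) :
    enorm' (x (T₂ + 1)) ≤ 2 * κ / γ := by
  obtain ⟨-, H, L, hH, hconj, hHH, hL⟩ := hss
  have hγ1 : γ ≤ 1 := by linarith [norm_nonneg L]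
  have hκ : 0 ≤ κ := (by positivity : (0 : ℝ) ≤ ‖H‖ * ‖H⁻¹‖).trans hHH
  have hbound := enorm'_le_of_conj_dynamics hH hL (by linarith) (fun t => x (t + 1))
    (fun t => w (t + 1)) (fun t => hw (t + 1))
    (fun t => hconj ▸ hdyn (t + 1) (Nat.le_add_left 1 t)) T₂
  rw [sub_sub_cancel] at hbound
  calc enorm' (x (T₂ + 1)) ≤ ‖H‖ * ‖H⁻¹‖ * ((1 - γ) ^ T₂ * enorm' (x 1) + 1 / γ) := hbound
    _ ≤ κ * (1 / γ + 1 / γ) := by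
        gcongr
        · exact add_nonneg (mul_nonneg (pow_nonneg (by linarith) _) (enorm'_nonneg _))
            (by positivity)
        · exact one_sub_pow_mul_le_inv_of_log_div_le hγ0 hγ1 (enorm'_nonneg _) hT₂
    _ = 2 * κ / γ := by ring

theorem stmt3 {dx du : ℕ} (A : Matrix (Fin dx) (Fin dx) ℝ)
    (B : Matrix (Fin dx) (Fin du) ℝ) (K : Matrix (Fin du) (Fin dx) ℝ)
    (κ γ : ℝ) (hκ : 1 ≤ κ) (hγ0 : 0 < γ) (hγ1 : γ < 1)
    (hss : StronglyStable A B K κ γ)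
    (x : ℕ → Fin dx → ℝ) (w : ℕ → Fin dx → ℝ)
    (hw : ∀ t, enorm' (w t) ≤ 1)
    (hdyn : ∀ t, 1 ≤ t → x (t + 1) = (A + B * K).mulVec (x t) + w t)
    (T₂ : ℕ)
    (hlog : 0 ≤ Real.log (γ * enorm' (x 1)))
    (hT₂ : Real.log (γ * enorm' (x 1)) / γ ≤ (T₂ : ℝ)) :
    enorm' (x (T₂ + 1)) ≤ 2 * κ / γ :=
  stmt3_general A B K κ γ hγ0 hss x w hw hdyn T₂ hT₂
end

section
/- Suppose (A, B) is (k, κ)-strongly controllable and ‖A‖, ‖B‖ ≤ β. Then for any linear controller K with ‖K‖ ≤ κ′, the system (A + BK, B) is (k, 4κ′²k²β^{2k}κ)-strongly controllable. -/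
/-
Write `A = (A + BK) + B(-K)`. Expanding `Aʲ B` in powers of `A + BK` factors the controllability
matrix as `C_k(A, B) = C_k(A + BK, B) T`, where `T` is block upper triangular with identity
diagonal blocks and off-diagonal blocks `-K Aᵐ B`, so `‖T‖ ≤ k κ' β^(k-1)`. In particular
`C' = C_k(A + BK, B)` keeps full row rank. With `E = Cᵀ(CCᵀ)⁻¹` and `F = C'ᵀ(C'C'ᵀ)⁻¹` one has
`(C'C'ᵀ)⁻¹ = Fᵀ T E`, `‖(CCᵀ)⁻¹‖ = ‖E‖²` and `‖(C'C'ᵀ)⁻¹‖ = ‖F‖²`, hence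
`‖F‖² ≤ ‖F‖ ‖T‖ ‖E‖` and `‖(C'C'ᵀ)⁻¹‖ ≤ ‖T‖² ‖(CCᵀ)⁻¹‖`.
-/

open scoped Matrix.Norms.L2Operator
open scoped Matrix

/-- The controllability matrix `C_k = [B, AB, A²B, …, A^{k-1}B]`. -/
noncomputable def ctrb {dx du : ℕ} (k : ℕ) (A : Matrix (Fin dx) (Fin dx) ℝ)
    (B : Matrix (Fin dx) (Fin du) ℝ) : Matrix (Fin dx) (Fin k × Fin du) ℝ :=
  fun i p => (A ^ (p.1 : ℕ) * B) i p.2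

/-- `(A, B)` is `(k, κ)`-strongly controllable. -/
noncomputable def StronglyControllable {dx du : ℕ} (A : Matrix (Fin dx) (Fin dx) ℝ)
    (B : Matrix (Fin dx) (Fin du) ℝ) (k : ℕ) (κ : ℝ) : Prop :=
  (ctrb k A B).rank = dx ∧ ‖(ctrb k A B * (ctrb k A B)ᵀ)⁻¹‖ ≤ κ

open Matrix

namespace Matrix

variable {ι κ m n : Type*} [Fintype ι] [Fintype κ] [Fintype m] [Fintype n]

section L2OpNorm

variable [DecidableEq n]

lemma l2_opNorm_one_le : ‖(1 : Matrix n n ℝ)‖ ≤ 1 := by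
  rw [cstar_norm_def, map_one]
  exact ContinuousLinearMap.norm_id_le

lemma l2_opNorm_pow_mul_le [DecidableEq m] (A : Matrix n n ℝ) (B : Matrix n m ℝ) (j : ℕ) :
    ‖A ^ j * B‖ ≤ ‖A‖ ^ j * ‖B‖ := by
  induction j with
  | zero => simp
  | succ j ih =>
    calc ‖A ^ (j + 1) * B‖ = ‖A * (A ^ j * B)‖ := by rw [pow_succ', Matrix.mul_assoc]
      _ ≤ ‖A‖ * (‖A‖ ^ j * ‖B‖) := (l2_opNorm_mul _ _).trans (by gcongr)
      _ = ‖A‖ ^ (j + 1) * ‖B‖ := by ring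

lemma l2_opNorm_le_of_mulVec_le (A : Matrix m n ℝ) {c : ℝ} (hc : 0 ≤ c)
    (h : ∀ x : EuclideanSpace ℝ n, ‖WithLp.toLp 2 (A *ᵥ x.ofLp)‖ ≤ c * ‖x‖) : ‖A‖ ≤ c :=
  ContinuousLinearMap.opNorm_le_bound _ hc h

lemma l2_opNorm_le_of_block_le [DecidableEq κ] (T : Matrix (ι × m) (κ × n) ℝ) {c : ℝ}
    (hc : 0 ≤ c) (h : ∀ i j, ‖(comp ι κ m n ℝ).symm T i j‖ ≤ c) :
    ‖T‖ ≤ √(Fintype.card ι * Fintype.card κ) * c := by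
  refine l2_opNorm_le_of_mulVec_le T (by positivity) fun x => ?_
  set xb : κ → EuclideanSpace ℝ n := fun j => WithLp.toLp 2 fun b => x (j, b)
  have hrow : ∀ i, ‖WithLp.toLp 2 fun a => (T *ᵥ x.ofLp) (i, a)‖ ≤ ∑ j, c * ‖xb j‖ := by
    intro i
    have : (WithLp.toLp 2 fun a => (T *ᵥ x.ofLp) (i, a)) =
        ∑ j, WithLp.toLp 2 ((comp ι κ m n ℝ).symm T i j *ᵥ (xb j).ofLp) := by
      ext a
      simp [xb, mulVec, dotProduct, Fintype.sum_prod_type]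
    rw [this]
    refine (norm_sum_le _ _).trans (Finset.sum_le_sum fun j _ => ?_)
    exact (l2_opNorm_mulVec _ _).trans (by gcongr; exact h i j)
  have hx : ‖x‖ ^ 2 = ∑ j, ‖xb j‖ ^ 2 := by
    simp [EuclideanSpace.real_norm_sq_eq, xb, Fintype.sum_prod_type]
  rw [← sq_le_sq₀ (norm_nonneg _) (by positivity)]
  calc ‖WithLp.toLp 2 (T *ᵥ x.ofLp)‖ ^ 2
      = ∑ i, ‖WithLp.toLp 2 fun a => (T *ᵥ x.ofLp) (i, a)‖ ^ 2 := by
        simp [EuclideanSpace.real_norm_sq_eq, Fintype.sum_prod_type]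
    _ ≤ ∑ i : ι, (∑ j, c * ‖xb j‖) ^ 2 := by gcongr with i; exact hrow i
    _ ≤ ∑ i : ι, Fintype.card κ * ∑ j, (c * ‖xb j‖) ^ 2 := by
        gcongr; exact sq_sum_le_card_mul_sum_sq
    _ = (√(Fintype.card ι * Fintype.card κ) * c * ‖x‖) ^ 2 := by
        rw [mul_pow, mul_pow, Real.sq_sqrt (by positivity), hx]
        simp only [Finset.sum_const, Finset.card_univ, nsmul_eq_mul, mul_pow, ← Finset.mul_sum]
        ring

end L2OpNorm

lemma rank_eq_card_of_eq_mul {K : Type*} [Field K] {C C' : Matrix m n K} {T : Matrix n n K}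
    (hCT : C = C' * T) (hC : C.rank = Fintype.card m) : C'.rank = Fintype.card m :=
  le_antisymm C'.rank_le_card_height (hC ▸ hCT ▸ rank_mul_le_left C' T)

lemma isUnit_of_rank_eq_card {K : Type*} [Field K] [DecidableEq n] {M : Matrix n n K}
    (h : M.rank = Fintype.card n) : IsUnit M := by
  rw [← mulVec_surjective_iff_isUnit, ← coe_mulVecLin, ← LinearMap.range_eq_top]
  apply Submodule.eq_top_of_finrank_eq
  rw [← rank, h, Module.finrank_fintype_fun_eq_card]

variable [DecidableEq m]

lemma isUnit_mul_transpose_of_rank_eq_card {C : Matrix m n ℝ} (h : C.rank = Fintype.card m) :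
    IsUnit (C * Cᵀ) :=
  isUnit_of_rank_eq_card (by rwa [rank_self_mul_transpose])

lemma transpose_mul_inv_mul_transpose_mul_self {C : Matrix m n ℝ} (hC : IsUnit (C * Cᵀ)) :
    (Cᵀ * (C * Cᵀ)⁻¹)ᵀ * (Cᵀ * (C * Cᵀ)⁻¹) = (C * Cᵀ)⁻¹ := by
  have hsymm : ((C * Cᵀ)⁻¹)ᵀ = (C * Cᵀ)⁻¹ := by
    rw [transpose_nonsing_inv, transpose_mul, transpose_transpose]
  rw [transpose_mul, transpose_transpose, hsymm, Matrix.mul_assoc, ← Matrix.mul_assoc C,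
    mul_nonsing_inv _ ((isUnit_iff_isUnit_det _).mp hC), Matrix.mul_one]

lemma l2_opNorm_inv_mul_transpose [DecidableEq n] {C : Matrix m n ℝ} (hC : IsUnit (C * Cᵀ)) :
    ‖(C * Cᵀ)⁻¹‖ = ‖Cᵀ * (C * Cᵀ)⁻¹‖ ^ 2 := by
  rw [sq, ← l2_opNorm_conjTranspose_mul_self, conjTranspose_eq_transpose_of_trivial,
    transpose_mul_inv_mul_transpose_mul_self hC]

lemma l2_opNorm_inv_mul_transpose_le_of_eq_mul [DecidableEq n] {C C' : Matrix m n ℝ}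
    {T : Matrix n n ℝ} (hCT : C = C' * T) (hC : IsUnit (C * Cᵀ)) (hC' : IsUnit (C' * C'ᵀ)) :
    ‖(C' * C'ᵀ)⁻¹‖ ≤ ‖T‖ ^ 2 * ‖(C * Cᵀ)⁻¹‖ := by
  set E := Cᵀ * (C * Cᵀ)⁻¹
  set F := C'ᵀ * (C' * C'ᵀ)⁻¹
  have hfac : (C' * C'ᵀ)⁻¹ = Fᵀ * T * E := by
    have hF : Fᵀ = (C' * C'ᵀ)⁻¹ * C' := by
      rw [transpose_mul, transpose_transpose, transpose_nonsing_inv, transpose_mul,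
        transpose_transpose]
    calc (C' * C'ᵀ)⁻¹ = (C' * C'ᵀ)⁻¹ * ((C * Cᵀ) * (C * Cᵀ)⁻¹) := by
          rw [mul_nonsing_inv _ ((isUnit_iff_isUnit_det _).mp hC), Matrix.mul_one]
      _ = (C' * C'ᵀ)⁻¹ * (C * E) := by simp only [E, Matrix.mul_assoc]
      _ = Fᵀ * T * E := by rw [hF, hCT]; simp only [Matrix.mul_assoc]
  have hF : ‖F‖ ≤ ‖T‖ * ‖E‖ := by
    have h : ‖F‖ ^ 2 ≤ ‖F‖ * (‖T‖ * ‖E‖) := by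
      calc ‖F‖ ^ 2 = ‖Fᵀ * T * E‖ := by rw [← hfac, l2_opNorm_inv_mul_transpose hC']
        _ ≤ ‖Fᵀ‖ * ‖T‖ * ‖E‖ :=
          (l2_opNorm_mul _ _).trans (by gcongr; exact l2_opNorm_mul _ _)
        _ = ‖F‖ * (‖T‖ * ‖E‖) := by
          rw [← conjTranspose_eq_transpose_of_trivial, l2_opNorm_conjTranspose, mul_assoc]
    nlinarith [norm_nonneg F, mul_nonneg (norm_nonneg T) (norm_nonneg E)]
  calc ‖(C' * C'ᵀ)⁻¹‖ = ‖F‖ ^ 2 := l2_opNorm_inv_mul_transpose hC'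
    _ ≤ (‖T‖ * ‖E‖) ^ 2 := by gcongr
    _ = ‖T‖ ^ 2 * ‖(C * Cᵀ)⁻¹‖ := by rw [mul_pow, ← l2_opNorm_inv_mul_transpose hC]

end Matrix

section Transfer

variable {R : Type*} [CommRing R] {m n : Type*} [Fintype n] [DecidableEq m] [DecidableEq n]

def transferBlock (K : Matrix m n R) (A : Matrix n n R) (B : Matrix n m R) (i j : ℕ) :
    Matrix m m R :=
  if i = j then 1 else if i < j then K * A ^ (j - i - 1) * B else 0

def transferMatrix (k : ℕ) (K : Matrix m n R) (A : Matrix n n R) (B : Matrix n m R) :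
    Matrix (Fin k × m) (Fin k × m) R :=
  comp (Fin k) (Fin k) m m R (of fun i j => transferBlock K A B i j)

lemma transferBlock_succ_succ (K : Matrix m n R) (A : Matrix n n R) (B : Matrix n m R)
    (i j : ℕ) : transferBlock K A B (i + 1) (j + 1) = transferBlock K A B i j := by
  simp only [transferBlock, Nat.add_right_cancel_iff, Nat.add_lt_add_iff_right,
    Nat.add_sub_add_right]

lemma transferBlock_eq_zero_of_lt (K : Matrix m n R) (A : Matrix n n R) (B : Matrix n m R)
    {i j : ℕ} (h : j < i) : transferBlock K A B i j = 0 := by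
  simp [transferBlock, h.ne', h.not_gt]

lemma pow_mul_eq_sum_transferBlock [Fintype m] {A A' : Matrix n n R} {B : Matrix n m R}
    {K : Matrix m n R} (hA : A = A' + B * K) (j : ℕ) :
    A ^ j * B = ∑ i ∈ Finset.range (j + 1), A' ^ i * B * transferBlock K A B i j := by
  induction j with
  | zero => simp [transferBlock]
  | succ j ih =>
    have h0 : A' ^ 0 * B * transferBlock K A B 0 (j + 1) = B * K * (A ^ j * B) := by
      simp [transferBlock, Matrix.mul_assoc]
    rw [Finset.sum_range_succ', h0, pow_succ', Matrix.mul_assoc]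
    nth_rewrite 1 [hA]
    rw [Matrix.add_mul, Matrix.mul_assoc B K, ih, Matrix.mul_sum]
    simp only [transferBlock_succ_succ, pow_succ', Matrix.mul_assoc]

end Transfer

lemma ctrb_eq_ctrb_mul_transferMatrix {dx du : ℕ} {A A' : Matrix (Fin dx) (Fin dx) ℝ}
    {B : Matrix (Fin dx) (Fin du) ℝ} {K : Matrix (Fin du) (Fin dx) ℝ} (hA : A = A' + B * K)
    (k : ℕ) : ctrb k A B = ctrb k A' B * transferMatrix k K A B := by
  ext x ⟨j, b⟩
  have hsum : ∑ i ∈ Finset.range (j + 1), A' ^ i * B * transferBlock K A B i j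
      = ∑ i : Fin k, A' ^ (i : ℕ) * B * transferBlock K A B i j := by
    rw [Fin.sum_univ_eq_sum_range (fun i => A' ^ i * B * transferBlock K A B i j)]
    refine Finset.sum_subset (Finset.range_subset_range.mpr j.isLt) fun i _ hi => ?_
    rw [transferBlock_eq_zero_of_lt _ _ _ (by simpa using hi), Matrix.mul_zero]
  calc ctrb k A B x (j, b) = (A ^ (j : ℕ) * B) x b := rfl
    _ = (∑ i : Fin k, A' ^ (i : ℕ) * B * transferBlock K A B i j) x b := by
      rw [pow_mul_eq_sum_transferBlock hA, hsum]
    _ = (ctrb k A' B * transferMatrix k K A B) x (j, b) := by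
      rw [Matrix.sum_apply, mul_apply, Fintype.sum_prod_type]
      rfl

section TransferNorm

variable {m n : Type*} [Fintype m] [Fintype n] [DecidableEq m] [DecidableEq n]
  {A : Matrix n n ℝ} {B : Matrix n m ℝ} {K : Matrix m n ℝ} {k : ℕ} {β κ' : ℝ}

lemma norm_transferBlock_le (hβ : 1 ≤ β) (hκ' : 1 ≤ κ') (hA : ‖A‖ ≤ β) (hB : ‖B‖ ≤ β)
    (hK : ‖K‖ ≤ κ') {i j : ℕ} (hj : j < k) : ‖transferBlock K A B i j‖ ≤ κ' * β ^ (k - 1) := by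
  unfold transferBlock
  split_ifs with hij hlt
  · exact l2_opNorm_one_le.trans (one_le_mul_of_one_le_of_one_le hκ' (one_le_pow₀ hβ))
  · calc ‖K * A ^ (j - i - 1) * B‖ ≤ ‖K‖ * (‖A‖ ^ (j - i - 1) * ‖B‖) := by
          rw [Matrix.mul_assoc]
          exact (l2_opNorm_mul _ _).trans (by gcongr; exact l2_opNorm_pow_mul_le _ _ _)
      _ ≤ κ' * (β ^ (j - i - 1) * β) := by gcongr
      _ ≤ κ' * β ^ (k - 1) := by
          rw [← pow_succ]
          gcongr
          omega
  · simp only [norm_zero]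
    positivity

lemma norm_transferMatrix_le (hβ : 1 ≤ β) (hκ' : 1 ≤ κ') (hA : ‖A‖ ≤ β) (hB : ‖B‖ ≤ β)
    (hK : ‖K‖ ≤ κ') : ‖transferMatrix k K A B‖ ≤ k * (κ' * β ^ (k - 1)) := by
  have h := l2_opNorm_le_of_block_le (c := κ' * β ^ (k - 1)) (transferMatrix k K A B)
    (by positivity) fun i j => by
      rw [transferMatrix, Equiv.symm_apply_apply, of_apply]
      exact norm_transferBlock_le hβ hκ' hA hB hK j.isLt
  simpa [Real.sqrt_mul_self] using h

end TransferNorm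

theorem stmt5 {dx du : ℕ} (A : Matrix (Fin dx) (Fin dx) ℝ)
    (B : Matrix (Fin dx) (Fin du) ℝ) (K : Matrix (Fin du) (Fin dx) ℝ)
    (k : ℕ) (κ κ' β : ℝ) (hβ : 1 ≤ β) (hκ' : 1 ≤ κ')
    (hsc : StronglyControllable A B k κ)
    (hA : ‖A‖ ≤ β) (hB : ‖B‖ ≤ β) (hK : ‖K‖ ≤ κ') :
    StronglyControllable (A + B * K) B k (4 * κ' ^ 2 * (k : ℝ) ^ 2 * β ^ (2 * k) * κ) := by
  obtain ⟨hrank, hκ⟩ := hsc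
  have hfac : ctrb k A B = ctrb k (A + B * K) B * transferMatrix k (-K) A B :=
    ctrb_eq_ctrb_mul_transferMatrix (by rw [Matrix.mul_neg, add_neg_cancel_right]) k
  have hrank' : (ctrb k (A + B * K) B).rank = dx := by
    simpa using rank_eq_card_of_eq_mul hfac (by simpa using hrank)
  have hT := norm_transferMatrix_le (K := -K) (k := k) hβ hκ' hA hB (by rwa [norm_neg])
  have hκ0 : 0 ≤ κ := (norm_nonneg _).trans hκ
  refine ⟨hrank', ?_⟩
  calc _ ≤ ‖transferMatrix k (-K) A B‖ ^ 2 * ‖(ctrb k A B * (ctrb k A B)ᵀ)⁻¹‖ :=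
        l2_opNorm_inv_mul_transpose_le_of_eq_mul hfac
          (isUnit_mul_transpose_of_rank_eq_card (by simpa using hrank))
          (isUnit_mul_transpose_of_rank_eq_card (by simpa using hrank'))
    _ ≤ (k * (κ' * β ^ k)) ^ 2 * κ := by
        gcongr
        exact hT.trans (by gcongr; exact Nat.sub_le k 1)
    _ ≤ 4 * κ' ^ 2 * (k : ℝ) ^ 2 * β ^ (2 * k) * κ := by
        rw [pow_mul']
        nlinarith [show 0 ≤ κ' ^ 2 * (k : ℝ) ^ 2 * (β ^ k) ^ 2 * κ by positivity]
end

section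
/- In Algorithm AdvSysId with parameters satisfying ‖A‖, ‖B‖ ≤ λ/4 − 1, ‖w_t‖ ≤ 1, ‖x_1‖ ≤ 1, λ ≥ 1, ε₀ < 1, and with nonzero scaled controls u_t = λ^{t−1} ε₀^{−i} e_i applied at times t ≡ 1 (mod k+1) (with i = (t−1)/(k+1) + 1) and u_t = 0 otherwise, the state at every time t = (i−1)(k+1)+j+2 with 0 ≤ j ≤ k satisfies ‖x_t‖ ≤ λ^{t−1} ε₀^{−i}. -/
/-!
Within the block of length `k + 1` that starts with the `i`-th exploration input, a common bound
`M ≥ 1` on state, control and noise grows by a factor at most `‖A‖ + ‖B‖ + 1 ≤ λ` per step.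
Starting the block from `‖x‖ ≤ λ^{t-1} ε₀^{-(i-1)}` and taking `M = λ^{t-1} ε₀^{-i} = ξ_i` (which
dominates both that bound and the input), the states of the block obey the claimed bound, and its
last state gives the starting bound of the next block.
-/

open scoped Matrix.Norms.L2Operator

noncomputable def euclidNorm {n : ℕ} (v : Fin n → ℝ) : ℝ := Real.sqrt (∑ i, v i ^ 2)

section

open Matrix

lemma euclidNorm_eq_norm {n : ℕ} (v : Fin n → ℝ) :
    euclidNorm v = ‖(EuclideanSpace.equiv (Fin n) ℝ).symm v‖ := by
  simp [euclidNorm, EuclideanSpace.norm_eq]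

lemma euclidNorm_add_le {n : ℕ} (v w : Fin n → ℝ) :
    euclidNorm (v + w) ≤ euclidNorm v + euclidNorm w := by
  simp only [euclidNorm_eq_norm]
  exact norm_add_le _ _

lemma euclidNorm_mulVec_le {m n : ℕ} (A : Matrix (Fin m) (Fin n) ℝ) (v : Fin n → ℝ) :
    euclidNorm (A *ᵥ v) ≤ ‖A‖ * euclidNorm v := by
  simp only [euclidNorm_eq_norm]
  exact A.l2_opNorm_mulVec _

lemma euclidNorm_zero {n : ℕ} : euclidNorm (0 : Fin n → ℝ) = 0 := by
  simp [euclidNorm]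

lemma euclidNorm_single {n : ℕ} (i : Fin n) {c : ℝ} (hc : 0 ≤ c) :
    euclidNorm (fun l => if l = i then c else 0) = c := by
  rw [euclidNorm, Finset.sum_eq_single i (fun l _ hl => by simp [hl]) (by simp)]
  simp [Real.sqrt_sq hc]

variable {dx du : ℕ} {A : Matrix (Fin dx) (Fin dx) ℝ} {B : Matrix (Fin dx) (Fin du) ℝ} {lam : ℝ}

lemma euclidNorm_step_le (hA : ‖A‖ ≤ lam / 4 - 1) (hB : ‖B‖ ≤ lam / 4 - 1)
    {x : Fin dx → ℝ} {u : Fin du → ℝ} {w : Fin dx → ℝ} {M : ℝ}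
    (hx : euclidNorm x ≤ M) (hu : euclidNorm u ≤ M) (hw : euclidNorm w ≤ 1) (hM : 1 ≤ M) :
    euclidNorm (A *ᵥ x + B *ᵥ u + w) ≤ lam * M := by
  have hAx : ‖A‖ * euclidNorm x ≤ ‖A‖ * M := mul_le_mul_of_nonneg_left hx (norm_nonneg A)
  have hBu : ‖B‖ * euclidNorm u ≤ ‖B‖ * M := mul_le_mul_of_nonneg_left hu (norm_nonneg B)
  have hlam : 0 ≤ lam := by linarith [norm_nonneg A]
  calc euclidNorm (A *ᵥ x + B *ᵥ u + w)
      ≤ ‖A‖ * euclidNorm x + ‖B‖ * euclidNorm u + euclidNorm w := by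
        linarith [euclidNorm_add_le (A *ᵥ x + B *ᵥ u) w, euclidNorm_add_le (A *ᵥ x) (B *ᵥ u),
          euclidNorm_mulVec_le A x, euclidNorm_mulVec_le B u]
    _ ≤ (lam / 4 - 1) * M + (lam / 4 - 1) * M + M := by
        nlinarith [mul_le_mul_of_nonneg_right hA (by linarith : (0 : ℝ) ≤ M),
          mul_le_mul_of_nonneg_right hB (by linarith : (0 : ℝ) ≤ M)]
    _ ≤ lam * M := by nlinarith

variable {x w : ℕ → Fin dx → ℝ} {u : ℕ → Fin du → ℝ}

lemma euclidNorm_trajectory_le (hlam : 1 ≤ lam) (hA : ‖A‖ ≤ lam / 4 - 1)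
    (hB : ‖B‖ ≤ lam / 4 - 1) (hw : ∀ t, euclidNorm (w t) ≤ 1)
    (hdyn : ∀ t, 1 ≤ t → x (t + 1) = A *ᵥ x t + B *ᵥ u t + w t)
    {t₀ : ℕ} (ht₀ : 1 ≤ t₀) {M : ℝ} (hM : 1 ≤ M) (hx : euclidNorm (x t₀) ≤ M)
    {n : ℕ} (hu : ∀ s, t₀ ≤ s → s < t₀ + n → euclidNorm (u s) ≤ M) :
    euclidNorm (x (t₀ + n)) ≤ lam ^ n * M := by
  induction n with
  | zero => simpa using hx
  | succ n ih =>
    have hMn : M ≤ lam ^ n * M := le_mul_of_one_le_left (by linarith) (one_le_pow₀ hlam)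
    rw [← add_assoc, hdyn _ (by omega), pow_succ', mul_assoc]
    exact euclidNorm_step_le hA hB (ih fun s hs hs' => hu s hs (by omega))
      ((hu _ le_self_add (by omega)).trans hMn) (hw _) (hM.trans hMn)

lemma exploration_control_le {k : ℕ} {c : ℝ} (hc : 0 ≤ c) (i : Fin du)
    (hu : u ((i : ℕ) * (k + 1) + 1) = fun l => if l = i then c else 0)
    (hu0 : ∀ t : ℕ, 1 ≤ t → (t - 1) % (k + 1) ≠ 0 → u t = 0)
    {s : ℕ} (hs : (i : ℕ) * (k + 1) + 1 ≤ s) (hs' : s ≤ (i : ℕ) * (k + 1) + k + 1) :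
    euclidNorm (u s) ≤ c := by
  rcases hs.eq_or_lt with rfl | hlt
  · rw [hu, euclidNorm_single i hc]
  · obtain ⟨r, rfl⟩ : ∃ r, s = r + (i : ℕ) * (k + 1) + 1 := ⟨s - 1 - i * (k + 1), by omega⟩
    have hr : (r + (i : ℕ) * (k + 1) + 1 - 1) % (k + 1) = r := by
      rw [Nat.add_sub_cancel, Nat.add_mul_mod_self_right, Nat.mod_eq_of_lt (by omega)]
    rw [hu0 _ (by omega) (by omega), euclidNorm_zero]
    exact hc

lemma euclidNorm_exploration_block_le {k : ℕ} {ε₀ : ℝ} (hlam : 1 ≤ lam) (hε₀ : 0 < ε₀)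
    (hε₀1 : ε₀ < 1) (hA : ‖A‖ ≤ lam / 4 - 1) (hB : ‖B‖ ≤ lam / 4 - 1)
    (hw : ∀ t, euclidNorm (w t) ≤ 1)
    (hdyn : ∀ t, 1 ≤ t → x (t + 1) = A *ᵥ x t + B *ᵥ u t + w t) (i : Fin du)
    (hu : u ((i : ℕ) * (k + 1) + 1) =
      fun l => if l = i then lam ^ ((i : ℕ) * (k + 1)) * ε₀⁻¹ ^ ((i : ℕ) + 1) else 0)
    (hu0 : ∀ t : ℕ, 1 ≤ t → (t - 1) % (k + 1) ≠ 0 → u t = 0)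
    (hstart : euclidNorm (x ((i : ℕ) * (k + 1) + 1)) ≤ lam ^ ((i : ℕ) * (k + 1)) * ε₀⁻¹ ^ (i : ℕ))
    {j : ℕ} (hj : j ≤ k) :
    euclidNorm (x ((i : ℕ) * (k + 1) + j + 2)) ≤
      lam ^ ((i : ℕ) * (k + 1) + j + 1) * ε₀⁻¹ ^ ((i : ℕ) + 1) := by
  have hε : 1 ≤ ε₀⁻¹ := (one_le_inv₀ hε₀).mpr hε₀1.le
  set M := lam ^ ((i : ℕ) * (k + 1)) * ε₀⁻¹ ^ ((i : ℕ) + 1) with hM_def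
  have hM : 1 ≤ M := one_le_mul_of_one_le_of_one_le (one_le_pow₀ hlam) (one_le_pow₀ hε)
  have hx : euclidNorm (x ((i : ℕ) * (k + 1) + 1)) ≤ M :=
    hstart.trans (mul_le_mul_of_nonneg_left (pow_le_pow_right₀ hε (by omega)) (by positivity))
  have h := euclidNorm_trajectory_le hlam hA hB hw hdyn (by omega) hM hx (n := j + 1)
    fun s hs hs' => exploration_control_le (by positivity) i hu hu0 hs (by omega)
  rw [show (i : ℕ) * (k + 1) + j + 2 = (i : ℕ) * (k + 1) + 1 + (j + 1) by ring]
  exact h.trans_eq (by rw [hM_def]; ring)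

lemma euclidNorm_exploration_start_le {k : ℕ} {ε₀ : ℝ} (hlam : 1 ≤ lam) (hε₀ : 0 < ε₀)
    (hε₀1 : ε₀ < 1) (hA : ‖A‖ ≤ lam / 4 - 1) (hB : ‖B‖ ≤ lam / 4 - 1)
    (hx1 : euclidNorm (x 1) ≤ 1) (hw : ∀ t, euclidNorm (w t) ≤ 1)
    (hdyn : ∀ t, 1 ≤ t → x (t + 1) = A *ᵥ x t + B *ᵥ u t + w t)
    (hu : ∀ i : Fin du, u ((i : ℕ) * (k + 1) + 1) =
      fun l => if l = i then lam ^ ((i : ℕ) * (k + 1)) * ε₀⁻¹ ^ ((i : ℕ) + 1) else 0)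
    (hu0 : ∀ t : ℕ, 1 ≤ t → (t - 1) % (k + 1) ≠ 0 → u t = 0) {n : ℕ} (hn : n ≤ du) :
    euclidNorm (x (n * (k + 1) + 1)) ≤ lam ^ (n * (k + 1)) * ε₀⁻¹ ^ n := by
  induction n with
  | zero => simpa using hx1
  | succ n ih =>
    have h := euclidNorm_exploration_block_le hlam hε₀ hε₀1 hA hB hw hdyn ⟨n, hn⟩
      (hu ⟨n, hn⟩) hu0 (ih (by omega)) le_rfl
    rw [show (n + 1) * (k + 1) = n * (k + 1) + k + 1 by ring]
    exact h.trans_eq (by ring)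

end

/-- State bound during the `AdvSysId` exploration phase.  Indices are 0-based:
`i : Fin du` plays the role of the paper's `i - 1`, so the nonzero control
`ξ_i e_i` with `ξ_i = λ^{t-1} ε₀^{-i}` is injected at time `t = i(k+1) + 1`,
and the claimed bound is `‖x_t‖ ≤ λ^{t-1} ε₀^{-i}` at `t = i(k+1) + j + 2`. -/
theorem stmt7 {dx du : ℕ} (k : ℕ) (A : Matrix (Fin dx) (Fin dx) ℝ)
    (B : Matrix (Fin dx) (Fin du) ℝ) (lam ε₀ : ℝ)
    (hlam : 1 ≤ lam) (hε₀ : 0 < ε₀) (hε₀1 : ε₀ < 1)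
    (hA : ‖A‖ ≤ lam / 4 - 1) (hB : ‖B‖ ≤ lam / 4 - 1)
    (x w : ℕ → Fin dx → ℝ) (u : ℕ → Fin du → ℝ) (hx1 : euclidNorm (x 1) ≤ 1)
    (hw : ∀ t : ℕ, euclidNorm (w t) ≤ 1)
    (hdyn : ∀ t : ℕ, 1 ≤ t → x (t + 1) = A.mulVec (x t) + B.mulVec (u t) + w t)
    (hu : ∀ i : Fin du,
      u ((i : ℕ) * (k + 1) + 1) =
        fun l => if l = i then lam ^ ((i : ℕ) * (k + 1)) * ε₀⁻¹ ^ ((i : ℕ) + 1) else 0)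
    (hu0 : ∀ t : ℕ, 1 ≤ t → (t - 1) % (k + 1) ≠ 0 → u t = (0 : Fin du → ℝ)) :
    ∀ i : Fin du, ∀ j : ℕ, j ≤ k →
      euclidNorm (x ((i : ℕ) * (k + 1) + j + 2)) ≤
        lam ^ ((i : ℕ) * (k + 1) + j + 1) * ε₀⁻¹ ^ ((i : ℕ) + 1) := by
  intro i j hj
  exact euclidNorm_exploration_block_le hlam hε₀ hε₀1 hA hB hw hdyn i (hu i) hu0
    (euclidNorm_exploration_start_le hlam hε₀ hε₀1 hA hB hx1 hw hdyn hu hu0 i.isLt.le) hj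
end

section
/- Let A be the unique solution of X C_k = Y where C_k has full row rank with σ_min(C_k) ≥ κ^{−1/2}, and suppose ‖C₀ − C_k‖_F ≤ δ < σ_min(C_k) and ‖C₁ − Y‖_F ≤ δ. Then the least-squares solution Â = C₁C₀ᵀ(C₀C₀ᵀ)⁻¹ satisfies, for each row i, ‖A_i − Â_i‖ ≤ (δ + δ‖A_i‖)/(σ_min(C_k) − δ), and consequently ‖A − Â‖_F² = Σ_i ‖A_i − Â_i‖². -/
open scoped Matrix.Norms.L2Operator
open scoped Matrix

/-- The Euclidean (ℓ²) norm of a vector. -/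
noncomputable def enorm₂ {n : ℕ} (v : Fin n → ℝ) : ℝ := Real.sqrt (∑ i, v i ^ 2)

/-- The Frobenius norm of a matrix. -/
noncomputable def frobNorm {m n : ℕ} (M : Matrix (Fin m) (Fin n) ℝ) : ℝ :=
  Real.sqrt (∑ i, ∑ j, M i j ^ 2)

/-- The smallest singular value of a (full row rank) matrix
`C ∈ ℝ^{m × n}`: the infimum of `‖Cᵀ v‖` over unit vectors `v`. -/
noncomputable def sMin {m n : ℕ} (C : Matrix (Fin m) (Fin n) ℝ) : ℝ :=
  sInf ((fun v : Fin m → ℝ => enorm₂ (Cᵀ.mulVec v)) '' {v | enorm₂ v = 1})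
/-! The normal equations give `(A - Â) C₀ C₀ᵀ = (A C₀ - C₁) C₀ᵀ`. Row by row, with
`x = A_i - Â_i` and the residual `w = (A C₀ - C₁)_i`, this says that `x C₀` is the orthogonal
projection of `w` onto the row space of `C₀`, so `‖x C₀‖ ≤ ‖w‖`. On the other side,
`‖x C₀‖ ≥ (σ_min(C_k) - δ) ‖x‖` by the perturbation bound `‖x (C₀ - C_k)‖ ≤ δ ‖x‖` (which also
makes `C₀ C₀ᵀ` invertible), and `w = A_i (C₀ - C_k) - (C₁ - Y)_i` has norm at most `δ ‖A_i‖ + δ`. -/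

open Matrix

section EuclideanNorm

variable {a : ℕ}

lemma enorm₂_eq_norm (v : Fin a → ℝ) : enorm₂ v = ‖WithLp.toLp 2 v‖ := by
  simp [enorm₂, EuclideanSpace.norm_eq]

lemma enorm₂_nonneg (v : Fin a → ℝ) : 0 ≤ enorm₂ v := Real.sqrt_nonneg _

lemma enorm₂_sq (v : Fin a → ℝ) : enorm₂ v ^ 2 = v ⬝ᵥ v := by
  rw [enorm₂, Real.sq_sqrt (Finset.sum_nonneg fun _ _ => sq_nonneg _)]
  simp only [dotProduct, sq]

lemma enorm₂_eq_zero {v : Fin a → ℝ} : enorm₂ v = 0 ↔ v = 0 := by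
  rw [enorm₂_eq_norm, norm_eq_zero, WithLp.toLp_eq_zero]

lemma enorm₂_smul (c : ℝ) (v : Fin a → ℝ) : enorm₂ (c • v) = |c| * enorm₂ v := by
  rw [enorm₂_eq_norm, enorm₂_eq_norm, WithLp.toLp_smul, norm_smul, Real.norm_eq_abs]

lemma enorm₂_sub_le (v w : Fin a → ℝ) : enorm₂ (v - w) ≤ enorm₂ v + enorm₂ w := by
  simpa only [enorm₂_eq_norm, WithLp.toLp_sub] using norm_sub_le _ _

lemma dotProduct_le_enorm₂_mul (v w : Fin a → ℝ) : v ⬝ᵥ w ≤ enorm₂ v * enorm₂ w := by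
  simpa [enorm₂_eq_norm, EuclideanSpace.inner_toLp_toLp, dotProduct_comm] using
    real_inner_le_norm (WithLp.toLp 2 v) (WithLp.toLp 2 w)

end EuclideanNorm

section Frobenius

variable {a b : ℕ}

lemma frobNorm_sq_eq_sum_enorm₂_sq (M : Matrix (Fin a) (Fin b) ℝ) :
    frobNorm M ^ 2 = ∑ i, enorm₂ (M i) ^ 2 := by
  simp only [frobNorm, enorm₂]
  rw [Real.sq_sqrt (by positivity)]
  exact Finset.sum_congr rfl fun i _ => (Real.sq_sqrt (by positivity)).symm

lemma enorm₂_row_le_frobNorm (M : Matrix (Fin a) (Fin b) ℝ) (i : Fin a) :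
    enorm₂ (M i) ≤ frobNorm M :=
  Real.sqrt_le_sqrt <| Finset.single_le_sum (f := fun i => ∑ j, M i j ^ 2)
    (fun _ _ => by positivity) (Finset.mem_univ i)

lemma enorm₂_vecMul_le (v : Fin a → ℝ) (M : Matrix (Fin a) (Fin b) ℝ) :
    enorm₂ (v ᵥ* M) ≤ enorm₂ v * frobNorm M := by
  have cauchySchwarz : ∑ j, (v ᵥ* M) j ^ 2 ≤ (∑ i, v i ^ 2) * ∑ i, ∑ j, M i j ^ 2 := by
    calc ∑ j, (v ᵥ* M) j ^ 2 ≤ ∑ j, (∑ i, v i ^ 2) * ∑ i, M i j ^ 2 :=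
          Finset.sum_le_sum fun j _ =>
            Finset.sum_mul_sq_le_sq_mul_sq Finset.univ v fun i => M i j
      _ = (∑ i, v i ^ 2) * ∑ i, ∑ j, M i j ^ 2 := by rw [← Finset.mul_sum, Finset.sum_comm]
  rw [enorm₂, enorm₂, frobNorm, ← Real.sqrt_mul (by positivity)]
  exact Real.sqrt_le_sqrt cauchySchwarz

end Frobenius

section SmallestSingularValue

variable {a b : ℕ}

lemma sMin_le_enorm₂_vecMul (C : Matrix (Fin a) (Fin b) ℝ) {v : Fin a → ℝ} (hv : enorm₂ v = 1) :
    sMin C ≤ enorm₂ (v ᵥ* C) := by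
  rw [← mulVec_transpose]
  exact csInf_le ⟨0, by rintro t ⟨u, _, rfl⟩; exact enorm₂_nonneg _⟩ ⟨v, hv, rfl⟩

lemma sMin_mul_enorm₂_le (C : Matrix (Fin a) (Fin b) ℝ) (v : Fin a → ℝ) :
    sMin C * enorm₂ v ≤ enorm₂ (v ᵥ* C) := by
  rcases eq_or_ne v 0 with rfl | hv
  · simp [enorm₂]
  have hpos : 0 < enorm₂ v := (enorm₂_nonneg v).lt_of_ne' (enorm₂_eq_zero.not.mpr hv)
  have hunit : enorm₂ ((enorm₂ v)⁻¹ • v) = 1 := by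
    rw [enorm₂_smul, abs_inv, abs_of_pos hpos, inv_mul_cancel₀ hpos.ne']
  have h := sMin_le_enorm₂_vecMul C hunit
  rw [smul_vecMul, enorm₂_smul, abs_inv, abs_of_pos hpos] at h
  rwa [← le_inv_mul_iff₀' hpos]

lemma sub_mul_enorm₂_le_of_frobNorm_sub_le {C C' : Matrix (Fin a) (Fin b) ℝ} {δ : ℝ}
    (h : frobNorm (C' - C) ≤ δ) (v : Fin a → ℝ) :
    (sMin C - δ) * enorm₂ v ≤ enorm₂ (v ᵥ* C') := by
  have hsplit : v ᵥ* C = v ᵥ* C' - v ᵥ* (C' - C) := by rw [vecMul_sub]; abel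
  linarith [sMin_mul_enorm₂_le C v, enorm₂_vecMul_le v (C' - C),
    hsplit ▸ enorm₂_sub_le (v ᵥ* C') (v ᵥ* (C' - C)),
    mul_le_mul_of_nonneg_left h (enorm₂_nonneg v)]

end SmallestSingularValue

section LeastSquares

variable {a b : ℕ}

lemma enorm₂_vecMul_le_of_vecMul_mul_transpose_eq {C : Matrix (Fin a) (Fin b) ℝ}
    {x : Fin a → ℝ} {w : Fin b → ℝ} (h : x ᵥ* (C * Cᵀ) = w ᵥ* Cᵀ) :
    enorm₂ (x ᵥ* C) ≤ enorm₂ w := by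
  set u := x ᵥ* C
  have hCu : C *ᵥ u = C *ᵥ w := by
    rw [← vecMul_transpose, ← vecMul_transpose, vecMul_vecMul, h]
  have hsq : enorm₂ u ^ 2 ≤ enorm₂ u * enorm₂ w :=
    calc enorm₂ u ^ 2 = x ⬝ᵥ C *ᵥ u := by rw [enorm₂_sq, dotProduct_mulVec]
      _ = u ⬝ᵥ w := by rw [hCu, dotProduct_mulVec]
      _ ≤ enorm₂ u * enorm₂ w := dotProduct_le_enorm₂_mul u w
  nlinarith [enorm₂_nonneg u, enorm₂_nonneg w]

lemma isUnit_mul_transpose_of_mul_enorm₂_le {C : Matrix (Fin a) (Fin b) ℝ} {c : ℝ} (hc : 0 < c)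
    (h : ∀ v, c * enorm₂ v ≤ enorm₂ (v ᵥ* C)) : IsUnit (C * Cᵀ) := by
  refine vecMul_injective_iff_isUnit.mp fun x y (hxy : x ᵥ* (C * Cᵀ) = y ᵥ* (C * Cᵀ)) => ?_
  have hker : (x - y) ᵥ* (C * Cᵀ) = (0 : Fin b → ℝ) ᵥ* Cᵀ := by
    rw [sub_vecMul, hxy, sub_self, zero_vecMul]
  have h0 : c * enorm₂ (x - y) ≤ 0 := by
    simpa [enorm₂] using (h (x - y)).trans (enorm₂_vecMul_le_of_vecMul_mul_transpose_eq hker)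
  have : enorm₂ (x - y) = 0 :=
    le_antisymm (nonpos_of_mul_nonpos_right h0 hc) (enorm₂_nonneg _)
  exact sub_eq_zero.mp (enorm₂_eq_zero.mp this)

lemma sub_mul_inv_mul_transpose_mul {m n l R : Type*} [Fintype m] [DecidableEq m] [Fintype n]
    [CommRing R] {C₀ : Matrix m n R} (hG : IsUnit (C₀ * C₀ᵀ)) (A : Matrix l m R)
    (C₁ : Matrix l n R) :
    (A - C₁ * C₀ᵀ * (C₀ * C₀ᵀ)⁻¹) * (C₀ * C₀ᵀ) = (A * C₀ - C₁) * C₀ᵀ := by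
  rw [Matrix.sub_mul, Matrix.mul_assoc _ _ (C₀ * C₀ᵀ),
    nonsing_inv_mul _ ((isUnit_iff_isUnit_det _).mp hG), Matrix.mul_one, Matrix.sub_mul,
    Matrix.mul_assoc]

end LeastSquares

lemma enorm₂_row_mul_sub_le {l a b : ℕ} (A : Matrix (Fin l) (Fin a) ℝ)
    (C C₀ : Matrix (Fin a) (Fin b) ℝ) (C₁ : Matrix (Fin l) (Fin b) ℝ) (i : Fin l) :
    enorm₂ ((A * C₀ - C₁) i) ≤ frobNorm (C₁ - A * C) + enorm₂ (A i) * frobNorm (C₀ - C) := by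
  have hsplit : A * C₀ - C₁ = A * (C₀ - C) - (C₁ - A * C) := by rw [Matrix.mul_sub]; abel
  calc enorm₂ ((A * C₀ - C₁) i) ≤ enorm₂ (A i ᵥ* (C₀ - C)) + enorm₂ ((C₁ - A * C) i) := by
        rw [hsplit]; exact enorm₂_sub_le _ _
    _ ≤ frobNorm (C₁ - A * C) + enorm₂ (A i) * frobNorm (C₀ - C) := by
        linarith [enorm₂_vecMul_le (A i) (C₀ - C), enorm₂_row_le_frobNorm (C₁ - A * C) i]

theorem stmt9_general {dx m : ℕ} (A : Matrix (Fin dx) (Fin dx) ℝ)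
    (Ck C₀ C₁ Y : Matrix (Fin dx) (Fin m) ℝ)
    (δ : ℝ)
    (hY : Y = A * Ck)  -- `A` solves `X C_k = Y`
    (hδ : δ < sMin Ck)
    (hC₀ : frobNorm (C₀ - Ck) ≤ δ) (hC₁ : frobNorm (C₁ - Y) ≤ δ) :
    let Ahat := C₁ * C₀ᵀ * (C₀ * C₀ᵀ)⁻¹
    (∀ i : Fin dx,
      enorm₂ (fun j => A i j - Ahat i j) ≤
        (δ + δ * enorm₂ (A i)) / (sMin Ck - δ)) ∧
    frobNorm (A - Ahat) ^ 2 = ∑ i, enorm₂ (fun j => A i j - Ahat i j) ^ 2 := by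
  intro Ahat
  refine ⟨fun i => ?_, frobNorm_sq_eq_sum_enorm₂_sq (A - Ahat)⟩
  have hgap : 0 < sMin Ck - δ := sub_pos.mpr hδ
  have hlower := sub_mul_enorm₂_le_of_frobNorm_sub_le hC₀
  have hnormal : (A - Ahat) i ᵥ* (C₀ * C₀ᵀ) = (A * C₀ - C₁) i ᵥ* C₀ᵀ := by
    rw [← mul_apply_eq_vecMul, ← mul_apply_eq_vecMul,
      sub_mul_inv_mul_transpose_mul (isUnit_mul_transpose_of_mul_enorm₂_le hgap hlower)]
  have hresidual : enorm₂ ((A * C₀ - C₁) i) ≤ δ + δ * enorm₂ (A i) :=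
    calc enorm₂ ((A * C₀ - C₁) i) ≤ frobNorm (C₁ - Y) + enorm₂ (A i) * frobNorm (C₀ - Ck) :=
          hY ▸ enorm₂_row_mul_sub_le A Ck C₀ C₁ i
      _ ≤ δ + enorm₂ (A i) * δ := by gcongr; exact enorm₂_nonneg _
      _ = δ + δ * enorm₂ (A i) := by ring
  change enorm₂ ((A - Ahat) i) ≤ _
  rw [le_div_iff₀ hgap, mul_comm]
  calc (sMin Ck - δ) * enorm₂ ((A - Ahat) i) ≤ enorm₂ ((A - Ahat) i ᵥ* C₀) := hlower _
    _ ≤ enorm₂ ((A * C₀ - C₁) i) := enorm₂_vecMul_le_of_vecMul_mul_transpose_eq hnormal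
    _ ≤ δ + δ * enorm₂ (A i) := hresidual

theorem stmt9 {dx m : ℕ} (A : Matrix (Fin dx) (Fin dx) ℝ)
    (Ck C₀ C₁ Y : Matrix (Fin dx) (Fin m) ℝ)
    (κ δ : ℝ) (hκ : 0 < κ)
    (hrank : Ck.rank = dx)
    (hY : Y = A * Ck)  -- `A` solves `X C_k = Y`
    (huniq : ∀ X : Matrix (Fin dx) (Fin dx) ℝ, X * Ck = Y → X = A)
    (hσ : Real.sqrt κ⁻¹ ≤ sMin Ck)
    (hδ : δ < sMin Ck)
    (hC₀ : frobNorm (C₀ - Ck) ≤ δ) (hC₁ : frobNorm (C₁ - Y) ≤ δ) :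
    let Ahat := C₁ * C₀ᵀ * (C₀ * C₀ᵀ)⁻¹
    (∀ i : Fin dx,
      enorm₂ (fun j => A i j - Ahat i j) ≤
        (δ + δ * enorm₂ (A i)) / (sMin Ck - δ)) ∧
    frobNorm (A - Ahat) ^ 2 = ∑ i, enorm₂ (fun j => A i j - Ahat i j) ^ 2 :=
  stmt9_general A Ck C₀ C₁ Y δ hY hδ hC₀ hC₁
end

section
/- Let Σ be a positive semidefinite block matrix Σ = [[Σ_xx, Σ_xu],[Σ_xuᵀ, Σ_uu]] satisfying the steady-state constraint Σ_xx = (A B) Σ (A B)ᵀ + I and Tr(Σ) ≤ ν. Then Σ_xx ⪰ I (so Σ_xx is invertible), and the controller K = Σ_xuᵀ Σ_xx⁻¹ is (√ν, 1/(2ν))-strongly stable for (A, B). -/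
open scoped Matrix.Norms.L2Operator
open scoped Matrix

open scoped MatrixOrder

namespace Matrix

section Blocks

variable {R l m n : Type*} [CommRing R] [Fintype m] [Fintype n]

theorem trace_fromBlocks (A : Matrix m m R) (B : Matrix m n R) (C : Matrix n m R)
    (D : Matrix n n R) : (fromBlocks A B C D).trace = A.trace + D.trace := by
  simp [trace, Fintype.sum_sum_type]

theorem fromCols_mul_fromBlocks_mul_transpose [DecidableEq m] (A : Matrix l m R)
    (B : Matrix l n R) {S : Matrix m m R} (X : Matrix m n R) (U : Matrix n n R)
    (hS : Sᵀ = S) (hdet : IsUnit S.det) :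
    fromCols A B * fromBlocks S X Xᵀ U * (fromCols A B)ᵀ =
      (A + B * (Xᵀ * S⁻¹)) * S * (A + B * (Xᵀ * S⁻¹))ᵀ + B * (U - Xᵀ * S⁻¹ * X) * Bᵀ := by
  have hKt : (Xᵀ * S⁻¹)ᵀ = S⁻¹ * X := by
    rw [transpose_mul, transpose_nonsing_inv, hS, transpose_transpose]
  rw [fromCols_mul_fromBlocks, transpose_fromCols, fromCols_mul_fromRows, transpose_add,
    transpose_mul, hKt]
  simp only [Matrix.add_mul, Matrix.mul_add, Matrix.mul_sub, Matrix.sub_mul, Matrix.mul_assoc,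
    mul_nonsing_inv_cancel_left S _ hdet, nonsing_inv_mul_cancel_left S _ hdet]
  abel

end Blocks

variable {m n : Type*}

theorem posDef_of_one_le [DecidableEq n] {S : Matrix n n ℝ} (hS : 1 ≤ S) : S.PosDef := by
  simpa using PosDef.one.add_posSemidef (le_iff.mp hS)

variable [Fintype m] [Fintype n]

theorem mul_mul_transpose_le_mul_mul_transpose {P Q : Matrix n n ℝ} (h : P ≤ Q)
    (M : Matrix m n ℝ) : M * P * Mᵀ ≤ M * Q * Mᵀ := by
  rw [le_iff] at h ⊢
  simpa [Matrix.mul_sub, Matrix.sub_mul] using h.mul_mul_conjTranspose_same M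

variable [DecidableEq n]

theorem PosSemidef.le_smul_one_of_trace_le {P : Matrix n n ℝ} (hP : P.PosSemidef) {c : ℝ}
    (hc : P.trace ≤ c) : P ≤ c • (1 : Matrix n n ℝ) := by
  rw [← Algebra.algebraMap_eq_smul_one, le_algebraMap_iff_spectrum_le hP.isHermitian.isSelfAdjoint,
    hP.isHermitian.spectrum_real_eq_range_eigenvalues]
  rintro _ ⟨i, rfl⟩
  refine le_trans ?_ hc
  rw [hP.isHermitian.trace_eq_sum_eigenvalues]
  exact Finset.single_le_sum (fun j _ => hP.eigenvalues_nonneg j) (Finset.mem_univ i)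

theorem l2_opNorm_le_sqrt_of_transpose_mul_le {M : Matrix m n ℝ} {c : ℝ}
    (h : Mᵀ * M ≤ c • (1 : Matrix n n ℝ)) : ‖M‖ ≤ √c := by
  rw [l2_opNorm_def]
  refine ContinuousLinearMap.opNorm_le_bound _ (Real.sqrt_nonneg c) fun x => ?_
  set Mx := (toEuclideanLin ≪≫ₗ LinearMap.toContinuousLinearMap) M x
  have hsq : ‖Mx‖ ^ 2 ≤ c * ‖x‖ ^ 2 := by
    have hx := (le_iff.mp h).dotProduct_mulVec_nonneg (WithLp.ofLp x)
    simp only [sub_mulVec, dotProduct_sub, ← mulVec_mulVec, dotProduct_mulVec _ Mᵀ,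
      vecMul_transpose, smul_mulVec, one_mulVec, star_trivial, sub_nonneg] at hx
    rw [EuclideanSpace.real_norm_sq_eq, EuclideanSpace.real_norm_sq_eq]
    simpa [Mx, dotProduct, sq, Finset.mul_sum, mul_left_comm] using hx
  calc ‖Mx‖ = √(‖Mx‖ ^ 2) := (Real.sqrt_sq (norm_nonneg _)).symm
    _ ≤ √(c * ‖x‖ ^ 2) := Real.sqrt_le_sqrt hsq
    _ = √c * ‖x‖ := by rw [Real.sqrt_mul' _ (sq_nonneg _), Real.sqrt_sq (norm_nonneg _)]

theorem l2_opNorm_le_sqrt_of_mul_transpose_le [DecidableEq m] {M : Matrix m n ℝ} {c : ℝ}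
    (h : M * Mᵀ ≤ c • (1 : Matrix m m ℝ)) : ‖M‖ ≤ √c := by
  rw [← l2_opNorm_conjTranspose, conjTranspose_eq_transpose_of_trivial]
  exact l2_opNorm_le_sqrt_of_transpose_mul_le (by rwa [transpose_transpose])

theorem transpose_sqrt (S : Matrix n n ℝ) : (CFC.sqrt S)ᵀ = CFC.sqrt S := by
  simpa [star_eq_conjTranspose] using (IsSelfAdjoint.of_nonneg (CFC.sqrt_nonneg S)).star_eq

theorem PosDef.isUnit_sqrt {S : Matrix n n ℝ} (hS : S.PosDef) : IsUnit (CFC.sqrt S) :=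
  (CFC.isUnit_sqrt_iff S hS.posSemidef.nonneg).mpr hS.isUnit

theorem exists_similar_of_lyapunov_le {X S : Matrix n n ℝ} {ν : ℝ} (hν : 0 < ν) (hS : 1 ≤ S)
    (hSν : S ≤ ν • 1) (hX : X * S * Xᵀ + 1 ≤ S) :
    ∃ H L : Matrix n n ℝ, IsUnit H ∧ X = H * L * H⁻¹ ∧ ‖H‖ * ‖H⁻¹‖ ≤ √ν ∧
      ‖L‖ ≤ √(1 - ν⁻¹) := by
  have hSpd := posDef_of_one_le hS
  set H := CFC.sqrt S
  have hHH : H * H = S := CFC.sqrt_mul_sqrt_self S hSpd.posSemidef.nonneg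
  have hHt : Hᵀ = H := transpose_sqrt S
  have hHdet : IsUnit H.det := (isUnit_iff_isUnit_det H).mp hSpd.isUnit_sqrt
  have hHit : (H⁻¹)ᵀ = H⁻¹ := by rw [transpose_nonsing_inv, hHt]
  have hconj {P Q : Matrix n n ℝ} (h : P ≤ Q) : H⁻¹ * P * H⁻¹ ≤ H⁻¹ * Q * H⁻¹ := by
    simpa [hHit] using mul_mul_transpose_le_mul_mul_transpose h H⁻¹
  have hHSH : H⁻¹ * S * H⁻¹ = 1 := by
    rw [← hHH, Matrix.mul_assoc, Matrix.mul_assoc, mul_nonsing_inv _ hHdet, Matrix.mul_one,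
      nonsing_inv_mul _ hHdet]
  have hSinv : H⁻¹ * H⁻¹ = S⁻¹ := by rw [← hHH, Matrix.mul_inv_rev]
  have hSinv_le : S⁻¹ ≤ 1 := by simpa [hHSH, hSinv] using hconj hS
  have hinv_le_Sinv : ν⁻¹ • (1 : Matrix n n ℝ) ≤ S⁻¹ := by
    have := hconj hSν
    rw [hHSH, Matrix.mul_smul, Matrix.smul_mul, Matrix.mul_one, hSinv] at this
    simpa [smul_smul, inv_mul_cancel₀ hν.ne'] using
      smul_le_smul_of_nonneg_left this (inv_nonneg.mpr hν.le)
  refine ⟨H, H⁻¹ * X * H, hSpd.isUnit_sqrt, ?_, ?_, ?_⟩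
  · rw [← Matrix.mul_assoc, ← Matrix.mul_assoc, mul_nonsing_inv _ hHdet, Matrix.one_mul,
      Matrix.mul_assoc, mul_nonsing_inv _ hHdet, Matrix.mul_one]
  · calc ‖H‖ * ‖H⁻¹‖ ≤ √ν * √1 := by
          gcongr
          · exact l2_opNorm_le_sqrt_of_mul_transpose_le (by rwa [hHt, hHH])
          · exact l2_opNorm_le_sqrt_of_mul_transpose_le (by rwa [hHit, hSinv, one_smul])
      _ = √ν := by rw [Real.sqrt_one, mul_one]
  · refine l2_opNorm_le_sqrt_of_mul_transpose_le ?_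
    calc H⁻¹ * X * H * (H⁻¹ * X * H)ᵀ = H⁻¹ * (X * S * Xᵀ) * H⁻¹ := by
          simp only [transpose_mul, hHt, hHit, ← hHH, Matrix.mul_assoc]
      _ ≤ H⁻¹ * (S - 1) * H⁻¹ := hconj (le_sub_iff_add_le.mpr hX)
      _ = 1 - S⁻¹ := by rw [Matrix.mul_sub, Matrix.sub_mul, hHSH, Matrix.mul_one, hSinv]
      _ ≤ (1 - ν⁻¹) • 1 := by rw [sub_smul, one_smul]; exact sub_le_sub_left hinv_le_Sinv 1

theorem PosSemidef.transpose_mul_inv_mul_le {S : Matrix n n ℝ} {X : Matrix n m ℝ}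
    {U : Matrix m m ℝ} (h : (fromBlocks S X Xᵀ U).PosSemidef) (hS : S.PosDef) :
    Xᵀ * S⁻¹ * X ≤ U := by
  have := hS.isUnit.invertible
  rw [le_iff]
  simpa using (PosDef.fromBlocks₁₁ X U hS).mp (by simpa using h)

theorem mul_transpose_le_of_posSemidef_fromBlocks {S : Matrix n n ℝ} {X : Matrix n m ℝ}
    {U : Matrix m m ℝ} (h : (fromBlocks S X Xᵀ U).PosSemidef) (hS : 1 ≤ S) :
    Xᵀ * S⁻¹ * (Xᵀ * S⁻¹)ᵀ ≤ U := by
  have hSpd := posDef_of_one_le hS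
  have hdet : IsUnit S.det := (isUnit_iff_isUnit_det S).mp hSpd.isUnit
  calc Xᵀ * S⁻¹ * (Xᵀ * S⁻¹)ᵀ = Xᵀ * S⁻¹ * 1 * (Xᵀ * S⁻¹)ᵀ := by rw [Matrix.mul_one]
    _ ≤ Xᵀ * S⁻¹ * S * (Xᵀ * S⁻¹)ᵀ := mul_mul_transpose_le_mul_mul_transpose hS _
    _ = Xᵀ * S⁻¹ * X := by
      rw [nonsing_inv_mul_cancel_right S _ hdet, transpose_mul, transpose_nonsing_inv,
        transpose_transpose, (by simpa using hSpd.isHermitian.eq : Sᵀ = S), Matrix.mul_assoc]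
    _ ≤ U := h.transpose_mul_inv_mul_le hSpd

theorem lyapunov_le_of_eq_fromCols_mul_fromBlocks {A : Matrix n n ℝ} {B : Matrix n m ℝ}
    {S : Matrix n n ℝ} {X : Matrix n m ℝ} {U : Matrix m m ℝ}
    (h : (fromBlocks S X Xᵀ U).PosSemidef) (hS : S.PosDef)
    (hsteady : S = fromCols A B * fromBlocks S X Xᵀ U * (fromCols A B)ᵀ + 1) :
    (A + B * (Xᵀ * S⁻¹)) * S * (A + B * (Xᵀ * S⁻¹))ᵀ + 1 ≤ S := by
  have hdet : IsUnit S.det := (isUnit_iff_isUnit_det S).mp hS.isUnit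
  rw [fromCols_mul_fromBlocks_mul_transpose A B X U (by simpa using hS.isHermitian.eq) hdet]
    at hsteady
  have hschur : 0 ≤ B * (U - Xᵀ * S⁻¹ * X) * Bᵀ := by
    simpa using mul_mul_transpose_le_mul_mul_transpose
      (sub_nonneg.mpr (h.transpose_mul_inv_mul_le hS)) B
  calc _ ≤ (A + B * (Xᵀ * S⁻¹)) * S * (A + B * (Xᵀ * S⁻¹))ᵀ + B * (U - Xᵀ * S⁻¹ * X) * Bᵀ + 1 := by
        gcongr
        exact le_add_of_nonneg_right hschur
    _ = S := hsteady.symm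

end Matrix

theorem Real.sqrt_one_sub_le {x : ℝ} (hx : x ≤ 1) : √(1 - x) ≤ 1 - x / 2 :=
  Real.sqrt_le_iff.mpr ⟨by linarith, by nlinarith [sq_nonneg x]⟩

theorem stronglyStable_of_lyapunov_le {dx du : ℕ} {A : Matrix (Fin dx) (Fin dx) ℝ}
    {B : Matrix (Fin dx) (Fin du) ℝ} {K : Matrix (Fin du) (Fin dx) ℝ}
    {S : Matrix (Fin dx) (Fin dx) ℝ} {ν : ℝ} (hν : 1 ≤ ν) (hK : ‖K‖ ≤ √ν) (hS : 1 ≤ S)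
    (hSν : S ≤ ν • 1) (hX : (A + B * K) * S * (A + B * K)ᵀ + 1 ≤ S) :
    StronglyStable A B K √ν (1 / (2 * ν)) := by
  obtain ⟨H, L, hH, hHL, hcond, hL⟩ := Matrix.exists_similar_of_lyapunov_le (by linarith) hS hSν hX
  refine ⟨hK, H, L, hH, hHL, hcond, hL.trans ?_⟩
  calc √(1 - ν⁻¹) ≤ 1 - ν⁻¹ / 2 := Real.sqrt_one_sub_le (inv_le_one_of_one_le₀ hν)
    _ = 1 - 1 / (2 * ν) := by ring

theorem stmt11 {dx du : ℕ} (hdx : 0 < dx)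
    (A : Matrix (Fin dx) (Fin dx) ℝ) (B : Matrix (Fin dx) (Fin du) ℝ)
    (Sxx : Matrix (Fin dx) (Fin dx) ℝ) (Sxu : Matrix (Fin dx) (Fin du) ℝ)
    (Suu : Matrix (Fin du) (Fin du) ℝ) (ν : ℝ)
    (hpsd : (Matrix.fromBlocks Sxx Sxu Sxuᵀ Suu).PosSemidef)
    (hsteady : Sxx =
      Matrix.fromCols A B * Matrix.fromBlocks Sxx Sxu Sxuᵀ Suu *
        (Matrix.fromCols A B)ᵀ + 1)
    (htr : (Matrix.fromBlocks Sxx Sxu Sxuᵀ Suu).trace ≤ ν) :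
    (Sxx - 1).PosSemidef ∧ IsUnit Sxx ∧
      StronglyStable A B (Sxuᵀ * Sxx⁻¹) (Real.sqrt ν) (1 / (2 * ν)) := by
  have hSxx1 : (Sxx - 1).PosSemidef := by
    rw [← eq_sub_of_add_eq hsteady.symm]
    simpa using hpsd.mul_mul_conjTranspose_same (Matrix.fromCols A B)
  have hSxx : 1 ≤ Sxx := Matrix.le_iff.mpr hSxx1
  have hSpd := Matrix.posDef_of_one_le hSxx
  have hSuu : Suu.PosSemidef := hpsd.submatrix Sum.inr
  rw [Matrix.trace_fromBlocks] at htr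
  have hν : 1 ≤ ν := by
    have hdx1 : (1 : ℝ) ≤ dx := by exact_mod_cast hdx
    have : (dx : ℝ) ≤ Sxx.trace := by simpa [Matrix.trace_sub] using hSxx1.trace_nonneg
    linarith [hSuu.trace_nonneg]
  have hSxxν : Sxx ≤ ν • 1 :=
    hSpd.posSemidef.le_smul_one_of_trace_le (by linarith [hSuu.trace_nonneg])
  have hSuuν : Suu ≤ ν • 1 :=
    hSuu.le_smul_one_of_trace_le (by linarith [hSpd.posSemidef.trace_nonneg])
  refine ⟨hSxx1, hSpd.isUnit, stronglyStable_of_lyapunov_le hν ?_ hSxx hSxxν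
    (Matrix.lyapunov_le_of_eq_fromCols_mul_fromBlocks hpsd hSpd hsteady)⟩
  exact Matrix.l2_opNorm_le_sqrt_of_mul_transpose_le
    ((Matrix.mul_transpose_le_of_posSemidef_fromBlocks hpsd hSxx).trans hSuuν)
end

section
/- In the deterministic lower-bound construction, the state coefficients satisfy |c_{t+1}^{t+1}| = 2|c_t^t| + |a_{t+1}^t| ≥ 2|c_t^t|, where c_{t+1}^{t+1} = c_t^t d_t + a_{t+1}^t and d_t = sign(c_t^t)·sign(a_{t+1}^t)·2. Consequently, since |c_1^1| = 1, the state at time d_x satisfies ‖x_{d_x}‖ ≥ |c_{d_x}^{d_x}| ≥ 2^{d_x − 1}. -/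
/-- The Euclidean (ℓ²) norm of a vector. -/
noncomputable def euclNorm {n : ℕ} (v : Fin n → ℝ) : ℝ := Real.sqrt (∑ i, v i ^ 2)

/-!
Choosing `d = sign c · sign a · 2` makes both summands of `c d + a` carry the sign of `a`,
so no cancellation occurs: `|c d + a| = 2|c| + |a|`. Hence `|c_t^t|` at least doubles at
every step, and from `|c_1^1| = 1` we get `|c_t^t| ≥ 2^(t-1)`.
-/

namespace Real

lemma sign_mul_abs (r : ℝ) : sign r * |r| = r := by
  rcases lt_trichotomy r 0 with h | rfl | h
  · rw [sign_of_neg h, abs_of_neg h, neg_one_mul, neg_neg]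
  · rw [sign_zero, zero_mul]
  · rw [sign_of_pos h, abs_of_pos h, one_mul]

lemma self_mul_sign (r : ℝ) : r * sign r = |r| := by
  rcases lt_trichotomy r 0 with h | rfl | h
  · rw [sign_of_neg h, abs_of_neg h, mul_neg_one]
  · rw [sign_zero, mul_zero, abs_zero]
  · rw [sign_of_pos h, abs_of_pos h, mul_one]

lemma abs_sign_of_ne_zero {r : ℝ} (hr : r ≠ 0) : |sign r| = 1 := by
  rcases sign_apply_eq_of_ne_zero r hr with h | h <;> simp [h]

lemma abs_mul_sign_mul_sign_mul_add {k : ℝ} (hk : 0 ≤ k) (c : ℝ) {a : ℝ} (ha : a ≠ 0) :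
    |c * (sign c * sign a * k) + a| = k * |c| + |a| := by
  have h : c * (sign c * sign a * k) + a = sign a * (k * |c| + |a|) := by
    rw [mul_add, sign_mul_abs, ← self_mul_sign]; ring
  rw [h, abs_mul, abs_sign_of_ne_zero ha, one_mul, abs_of_nonneg (by positivity)]

end Real

lemma pow_mul_le_of_forall_mul_le_succ {u : ℕ → ℝ} {r : ℝ} (hr : 0 ≤ r) {m : ℕ}
    (hu : ∀ t, m ≤ t → r * u t ≤ u (t + 1)) {t : ℕ} (ht : m ≤ t) :
    r ^ (t - m) * u m ≤ u t := by
  induction t, ht using Nat.le_induction with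
  | base => rw [Nat.sub_self, pow_zero, one_mul]
  | succ t ht ih =>
    calc r ^ (t + 1 - m) * u m = r * (r ^ (t - m) * u m) := by
          rw [Nat.sub_add_comm ht, pow_succ]; ring
      _ ≤ r * u t := mul_le_mul_of_nonneg_left ih hr
      _ ≤ u (t + 1) := hu t ht

/-- In the deterministic lower-bound construction: `c t` is the coefficient
`c_t^t`, `a t` is `a_{t+1}^t`, and `d_t = sign(c_t^t)·sign(a_{t+1}^t)·2`, so
`c_{t+1}^{t+1} = c_t^t d_t + a_{t+1}^t`.  Then `|c_{t+1}^{t+1}| = 2|c_t^t| +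
|a_{t+1}^t| ≥ 2|c_t^t|`, and since `|c_1^1| = 1` and `‖x_t‖ ≥ |c_t^t|`, the
state at time `d_x` satisfies `‖x_{d_x}‖ ≥ |c_{d_x}^{d_x}| ≥ 2^{d_x−1}`. -/
theorem stmt15 {dx : ℕ} (hdx : 1 ≤ dx)
    (c a : ℕ → ℝ) (x : ℕ → Fin dx → ℝ)
    (ha : ∀ t, a t ≠ 0)
    (hc1 : |c 1| = 1)
    (hrec : ∀ t, 1 ≤ t →
      c (t + 1) = c t * (Real.sign (c t) * Real.sign (a t) * 2) + a t)
    (hx : ∀ t, |c t| ≤ euclNorm (x t)) :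
    (∀ t, 1 ≤ t → |c (t + 1)| = 2 * |c t| + |a t| ∧ 2 * |c t| ≤ |c (t + 1)|) ∧
    (2 : ℝ) ^ (dx - 1) ≤ |c dx| ∧ |c dx| ≤ euclNorm (x dx) := by
  have step : ∀ t, 1 ≤ t → |c (t + 1)| = 2 * |c t| + |a t| := fun t ht => by
    rw [hrec t ht, Real.abs_mul_sign_mul_sign_mul_add zero_le_two _ (ha t)]
  have doubling : ∀ t, 1 ≤ t → 2 * |c t| ≤ |c (t + 1)| := fun t ht => by
    rw [step t ht]; exact le_add_of_nonneg_right (abs_nonneg _)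
  refine ⟨fun t ht => ⟨step t ht, doubling t ht⟩, ?_, hx dx⟩
  simpa [hc1] using pow_mul_le_of_forall_mul_le_succ zero_le_two doubling hdx
end

section
/- Suppose (A, B) is (k, κ)-strongly controllable, so that C_k has full row rank and ‖(C_kC_kᵀ)⁻¹‖ ≤ κ. If u = C_kᵀ(C_kC_kᵀ)⁻¹v is the minimum-norm control reaching v, then the intermediate states of the noiseless trajectory x_{t+1} = Ax_t + Bu_t starting from x_1 = 0 satisfy ‖x_t‖² ≤ k β^{2k} κ ‖v‖² for all t ≤ k, where ‖A‖, ‖B‖ ≤ β and β ≥ 1. -/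
open scoped Matrix.Norms.L2Operator
open scoped Matrix

/-- Noiseless trajectory from the zero state: `traj A B u t` is the paper's
`x_{t+1}` (so `traj A B u 0 = x_1 = 0`, and `x_{t+1} = A x_t + B u_t`). -/
noncomputable def traj {dx du : ℕ} (A : Matrix (Fin dx) (Fin dx) ℝ)
    (B : Matrix (Fin dx) (Fin du) ℝ) (u : ℕ → Fin du → ℝ) : ℕ → Fin dx → ℝ
  | 0 => 0
  | t + 1 => A.mulVec (traj A B u t) + B.mulVec (u t)

/-!
The state `x_t` is a sum of at most `k` terms `A^{t-1-j} B u_j`, each of norm at most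
`β^k ‖u_j‖`, so by Cauchy–Schwarz `‖x_t‖² ≤ k β^{2k} Σ_j ‖u_j‖²`. The total energy of the
minimum-norm control `w = C_kᵀ (C_k C_kᵀ)⁻¹ v` is `wᵀw = vᵀ (C_k C_kᵀ)⁻¹ v ≤ κ ‖v‖²`.
-/

open Finset

section EuclideanNorm

variable {m n : ℕ}

lemma enorm₂_eq_norm_toLp (x : Fin n → ℝ) : enorm₂ x = ‖WithLp.toLp 2 x‖ := by
  simp [enorm₂, EuclideanSpace.norm_eq, sq_abs]

lemma enorm₂_nonneg_s17 (x : Fin n → ℝ) : 0 ≤ enorm₂ x :=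
  Real.sqrt_nonneg _

lemma enorm₂_sq_s17 (x : Fin n → ℝ) : enorm₂ x ^ 2 = ∑ i, x i ^ 2 :=
  Real.sq_sqrt (by positivity)

lemma enorm₂_sum_le {ι : Type*} (s : Finset ι) (f : ι → Fin n → ℝ) :
    enorm₂ (∑ j ∈ s, f j) ≤ ∑ j ∈ s, enorm₂ (f j) := by
  simp only [enorm₂_eq_norm_toLp, WithLp.toLp_sum]
  exact norm_sum_le _ _

lemma enorm₂_mulVec_le (M : Matrix (Fin m) (Fin n) ℝ) (x : Fin n → ℝ) :
    enorm₂ (M *ᵥ x) ≤ ‖M‖ * enorm₂ x := by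
  rw [enorm₂_eq_norm_toLp, enorm₂_eq_norm_toLp]
  exact M.l2_opNorm_mulVec (WithLp.toLp 2 x)

lemma dotProduct_le_enorm₂_mul_s17 (x y : Fin n → ℝ) : x ⬝ᵥ y ≤ enorm₂ x * enorm₂ y := by
  simpa [enorm₂_eq_norm_toLp, EuclideanSpace.inner_toLp_toLp, dotProduct_comm] using
    real_inner_le_norm (WithLp.toLp 2 x) (WithLp.toLp 2 y)

end EuclideanNorm

theorem Matrix.isUnit_of_rank_eq_card_s17 {K n : Type*} [Field K] [Fintype n] [DecidableEq n]
    {M : Matrix n n K} (h : M.rank = Fintype.card n) : IsUnit M := by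
  have hrange : LinearMap.range M.mulVecLin = ⊤ :=
    Submodule.eq_top_of_finrank_eq (by rw [← Matrix.rank, h, Module.finrank_fintype_fun_eq_card])
  exact Matrix.mulVec_surjective_iff_isUnit.mp (LinearMap.range_eq_top.mp hrange)

section MinNormControl

variable {d : ℕ} {ι : Type*} [Fintype ι]

lemma sum_sq_minNormSolution_eq (C : Matrix (Fin d) ι ℝ) (hC : IsUnit (C * Cᵀ).det)
    (v : Fin d → ℝ) :
    ∑ p, (Cᵀ *ᵥ ((C * Cᵀ)⁻¹ *ᵥ v)) p ^ 2 = ((C * Cᵀ)⁻¹ *ᵥ v) ⬝ᵥ v := by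
  set g := (C * Cᵀ)⁻¹ *ᵥ v
  calc ∑ p, (Cᵀ *ᵥ g) p ^ 2 = (g ᵥ* C) ⬝ᵥ (Cᵀ *ᵥ g) := by
        simp only [sq, ← Matrix.mulVec_transpose]; rfl
    _ = g ⬝ᵥ ((C * Cᵀ) *ᵥ g) := by
        rw [← Matrix.dotProduct_mulVec, Matrix.mulVec_mulVec]
    _ = g ⬝ᵥ v := by
        rw [Matrix.mulVec_mulVec, Matrix.mul_nonsing_inv _ hC, Matrix.one_mulVec]

lemma sum_sq_minNormSolution_le (C : Matrix (Fin d) ι ℝ) (hC : C.rank = d) (v : Fin d → ℝ) :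
    ∑ p, (Cᵀ *ᵥ ((C * Cᵀ)⁻¹ *ᵥ v)) p ^ 2 ≤ ‖(C * Cᵀ)⁻¹‖ * enorm₂ v ^ 2 := by
  have hunit : IsUnit (C * Cᵀ) :=
    Matrix.isUnit_of_rank_eq_card_s17 (by rw [Matrix.rank_self_mul_transpose, hC, Fintype.card_fin])
  rw [sum_sq_minNormSolution_eq C ((Matrix.isUnit_iff_isUnit_det _).mp hunit)]
  calc ((C * Cᵀ)⁻¹ *ᵥ v) ⬝ᵥ v ≤ enorm₂ ((C * Cᵀ)⁻¹ *ᵥ v) * enorm₂ v :=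
        dotProduct_le_enorm₂_mul_s17 _ _
    _ ≤ ‖(C * Cᵀ)⁻¹‖ * enorm₂ v * enorm₂ v := by
        gcongr
        · exact enorm₂_nonneg_s17 v
        · exact enorm₂_mulVec_le _ _
    _ = ‖(C * Cᵀ)⁻¹‖ * enorm₂ v ^ 2 := by ring

end MinNormControl

/-- Block `i` of `w` multiplies `A^i B` in `C_k w`, so it is the input applied `i` steps
before time `k`. -/
noncomputable def controlOfStacked {k du : ℕ} (w : Fin k × Fin du → ℝ) : ℕ → Fin du → ℝ :=
  fun t l => if h : t < k then w ((⟨t, h⟩ : Fin k).rev, l) else 0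

lemma sum_enorm₂_sq_controlOfStacked {k du : ℕ} (w : Fin k × Fin du → ℝ) :
    ∑ t ∈ range k, enorm₂ (controlOfStacked w t) ^ 2 = ∑ p, w p ^ 2 := by
  have hblock (i : Fin k) : controlOfStacked w i = fun l => w (i.rev, l) :=
    funext fun l => dif_pos i.isLt
  rw [← Fin.sum_univ_eq_sum_range (fun t => enorm₂ (controlOfStacked w t) ^ 2),
    Fintype.sum_prod_type]
  simp only [hblock, enorm₂_sq_s17]
  exact Fintype.sum_equiv Fin.revPerm _ _ fun _ => rfl

section Trajectory

variable {dx du : ℕ} {A : Matrix (Fin dx) (Fin dx) ℝ} {B : Matrix (Fin dx) (Fin du) ℝ} {β : ℝ}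

lemma traj_eq_sum (u : ℕ → Fin du → ℝ) (t : ℕ) :
    traj A B u t = ∑ j ∈ range t, (A ^ (t - 1 - j) * B) *ᵥ u j := by
  induction t with
  | zero => simp [traj]
  | succ t ih =>
    rw [traj, ih, Matrix.mulVec_sum, sum_range_succ, Nat.add_sub_cancel, Nat.sub_self, pow_zero,
      Matrix.one_mul]
    congr 1
    refine sum_congr rfl fun j hj => ?_
    rw [Matrix.mulVec_mulVec, ← Matrix.mul_assoc, ← pow_succ',
      show t - 1 - j + 1 = t - j by have := mem_range.mp hj; omega]

lemma norm_pow_mul_le (hA : ‖A‖ ≤ β) (hB : ‖B‖ ≤ β) (m : ℕ) : ‖A ^ m * B‖ ≤ β ^ (m + 1) := by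
  induction m with
  | zero => simpa using hB
  | succ m ih =>
    calc ‖A ^ (m + 1) * B‖ = ‖A * (A ^ m * B)‖ := by rw [pow_succ', Matrix.mul_assoc]
      _ ≤ ‖A‖ * ‖A ^ m * B‖ := Matrix.l2_opNorm_mul _ _
      _ ≤ β * β ^ (m + 1) := by gcongr; exact (norm_nonneg _).trans hA
      _ = β ^ (m + 1 + 1) := by ring

lemma enorm₂_traj_sq_le (hβ : 1 ≤ β) (hA : ‖A‖ ≤ β) (hB : ‖B‖ ≤ β) (u : ℕ → Fin du → ℝ)
    (t : ℕ) :
    enorm₂ (traj A B u t) ^ 2 ≤ t * β ^ (2 * t) * ∑ j ∈ range t, enorm₂ (u j) ^ 2 := by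
  have hterm : ∀ j ∈ range t, enorm₂ ((A ^ (t - 1 - j) * B) *ᵥ u j) ≤ β ^ t * enorm₂ (u j) := by
    intro j hj
    calc enorm₂ ((A ^ (t - 1 - j) * B) *ᵥ u j) ≤ ‖A ^ (t - 1 - j) * B‖ * enorm₂ (u j) :=
          enorm₂_mulVec_le _ _
      _ ≤ β ^ t * enorm₂ (u j) := by
          gcongr
          · exact enorm₂_nonneg_s17 _
          · exact (norm_pow_mul_le hA hB _).trans
              (pow_le_pow_right₀ hβ (by have := mem_range.mp hj; omega))
  have hstate : enorm₂ (traj A B u t) ≤ β ^ t * ∑ j ∈ range t, enorm₂ (u j) := by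
    rw [traj_eq_sum, mul_sum]
    exact (enorm₂_sum_le _ _).trans (sum_le_sum hterm)
  calc enorm₂ (traj A B u t) ^ 2 ≤ (β ^ t * ∑ j ∈ range t, enorm₂ (u j)) ^ 2 := by
        gcongr; exact enorm₂_nonneg_s17 _
    _ = β ^ (2 * t) * (∑ j ∈ range t, enorm₂ (u j)) ^ 2 := by ring
    _ ≤ β ^ (2 * t) * (t * ∑ j ∈ range t, enorm₂ (u j) ^ 2) := by
        gcongr
        simpa using sq_sum_le_card_mul_sum_sq (s := range t) (f := fun j => enorm₂ (u j))
    _ = t * β ^ (2 * t) * ∑ j ∈ range t, enorm₂ (u j) ^ 2 := by ring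

end Trajectory

theorem stmt17 {dx du : ℕ} (k : ℕ) (A : Matrix (Fin dx) (Fin dx) ℝ)
    (B : Matrix (Fin dx) (Fin du) ℝ) (κ β : ℝ) (hβ : 1 ≤ β)
    (hsc : StronglyControllable A B k κ)
    (hA : ‖A‖ ≤ β) (hB : ‖B‖ ≤ β)
    (v : Fin dx → ℝ) :
    -- the minimum-norm control reaching `v`, with `(u_k, …, u_1)` the
    -- concatenation `C_kᵀ (C_k C_kᵀ)⁻¹ v`
    let Ck := ctrb k A B
    let wvec := Ckᵀ.mulVec ((Ck * Ckᵀ)⁻¹.mulVec v)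
    let u : ℕ → Fin du → ℝ :=
      fun t l => if h : t < k then wvec ((⟨t, h⟩ : Fin k).rev, l) else 0
    -- every intermediate state `x_t`, `t ≤ k` (i.e. `traj` index `< k`),
    -- satisfies `‖x_t‖² ≤ k β^{2k} κ ‖v‖²`
    ∀ t : ℕ, t < k →
      enorm₂ (traj A B u t) ^ 2 ≤ (k : ℝ) * β ^ (2 * k) * κ * enorm₂ v ^ 2 := by
  intro Ck wvec u t ht
  obtain ⟨hrank, hκ⟩ := hsc
  have henergy : ∑ j ∈ range k, enorm₂ (u j) ^ 2 ≤ κ * enorm₂ v ^ 2 :=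
    calc ∑ j ∈ range k, enorm₂ (u j) ^ 2 = ∑ p, wvec p ^ 2 := sum_enorm₂_sq_controlOfStacked wvec
      _ ≤ ‖(Ck * Ckᵀ)⁻¹‖ * enorm₂ v ^ 2 := sum_sq_minNormSolution_le Ck hrank v
      _ ≤ κ * enorm₂ v ^ 2 := by gcongr
  calc enorm₂ (traj A B u t) ^ 2 ≤ t * β ^ (2 * t) * ∑ j ∈ range t, enorm₂ (u j) ^ 2 :=
        enorm₂_traj_sq_le hβ hA hB u t
    _ ≤ k * β ^ (2 * k) * ∑ j ∈ range k, enorm₂ (u j) ^ 2 := by gcongr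
    _ ≤ k * β ^ (2 * k) * (κ * enorm₂ v ^ 2) := by gcongr
    _ = k * β ^ (2 * k) * κ * enorm₂ v ^ 2 := by ring
end
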